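/- arXiv:2603.11009 — 6 statements merged into one kernel-verified Lean document; each statement's English description precedes it below -/
import Mathlib

section
/- Let Z be a chi-squared random variable with R degrees of freedom. Then for all u > 0, P(Z - R > 2√(Ru) + 2u) < e^{-u} and P(R - Z > 2√(Ru)) < e^{-u} imply that for every real t ≥ 2, E[|Z - R|^t] ≤ 2·(√2·t + √(2Rt))^t. -/
/-!
With `U` a standard exponential variable, `φ₋(u) = 2√(Ru)` and `φ₊(u) = φ₋(u) + 2u`, the two tail
bounds say that `Z - R` is stochastically dominated by `φ₊(U)` and `R - Z` by `φ₋(U)`. By the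
layer-cake formula, `E|Z - R|^t ≤ E φ₊(U)^t + E φ₋(U)^t`. Since `E U^s = Γ(s + 1)`, the elementary
bounds `Γ(s + 1) ≤ s^s` for `s ≥ 1` and `2^t Γ(t + 1) ≤ (√2 t)^t` for `t ≥ 2` give
`‖φ₋(U)‖_t ≤ √(2Rt)` and, with Minkowski's inequality, `‖φ₊(U)‖_t ≤ √2 t + √(2Rt)`.
`Z` is not assumed measurable, so the layer-cake formula for `μ` is only used as an inequality,
through a measurable minorant of `|Z - R|^t`.
-/

open MeasureTheory Set Real ProbabilityTheory
open scoped ENNReal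

namespace Real

theorem Gamma_add_one_le_of_le {α β : ℝ} (hβ : 0 < β) (hβα : β ≤ α) :
    Gamma (α + 1) ≤ α ^ (α - β) * exp (β - α) * ((α / β) ^ (β + 1) * Gamma (β + 1)) := by
  have hα : 0 < α := hβ.trans_le hβα
  have hrate : 0 < β / α := by positivity
  have hscaled := integral_rpow_mul_exp_neg_mul_Ioi (by linarith : 0 < β + 1) hrate
  rw [one_div_div] at hscaled
  rw [Gamma_eq_integral (by linarith), ← hscaled, ← integral_const_mul]
  refine integral_mono_of_nonneg ?_ ?_ ?_
  · filter_upwards [ae_restrict_mem measurableSet_Ioi] with u (hu : 0 < u)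
    positivity
  · refine (Integrable.of_integral_ne_zero ?_).const_mul _
    rw [hscaled]
    exact (mul_pos (by positivity) (Gamma_pos_of_pos (by linarith))).ne'
  -- `u^α e^{-u} ≤ α^{α-β} e^{β-α} u^β e^{-βu/α}` is `log (u / α) ≤ u / α - 1` times `α - β`.
  · filter_upwards [ae_restrict_mem measurableSet_Ioi] with u (hu : 0 < u)
    have hlog : log (u / α) ≤ u / α - 1 := log_le_sub_one_of_pos (by positivity)
    rw [log_div hu.ne' hα.ne'] at hlog
    have hkey : (α - β) * (log u - log α) ≤ (α - β) * (u / α - 1) :=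
      mul_le_mul_of_nonneg_left hlog (by linarith)
    have hsplit : (α - β) * (u / α) + β / α * u = u := by field_simp; ring
    simp only [add_sub_cancel_right]
    rw [rpow_def_of_pos hu, rpow_def_of_pos hu, rpow_def_of_pos hα, ← exp_add, ← exp_add,
      ← exp_add, ← exp_add]
    exact exp_le_exp.2 (by nlinarith)

theorem Gamma_add_one_le_rpow_self {s : ℝ} (hs : 1 ≤ s) : Gamma (s + 1) ≤ s ^ s := by
  have hs0 : 0 < s := by linarith
  calc Gamma (s + 1) ≤ s ^ (s - 1) * exp (1 - s) * ((s / 1) ^ ((1 : ℝ) + 1) * Gamma (1 + 1)) :=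
        Gamma_add_one_le_of_le one_pos hs
    _ = s ^ (s - 1) * exp (1 - s) * s ^ (2 : ℝ) := by norm_num
    _ ≤ s ^ s := by
        have hlog := log_le_sub_one_of_pos hs0
        rw [rpow_def_of_pos hs0, rpow_def_of_pos hs0, rpow_def_of_pos hs0, ← exp_add, ← exp_add]
        exact exp_le_exp.2 (by nlinarith)

theorem two_rpow_mul_Gamma_add_one_le {t : ℝ} (ht : 2 ≤ t) :
    2 ^ t * Gamma (t + 1) ≤ (√2 * t) ^ t := by
  have ht0 : 0 < t := by linarith
  have hG3 : Gamma (2 + 1) = 2 := by norm_num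
  have hlog : log (t / 2) ≤ t / 2 - 1 := log_le_sub_one_of_pos (by positivity)
  rw [log_div ht0.ne' two_ne_zero] at hlog
  have hlog2 : log 2 < 1 := log_two_lt_d9.trans (by norm_num)
  calc 2 ^ t * Gamma (t + 1)
      ≤ 2 ^ t * (t ^ (t - 2) * exp (2 - t) * ((t / 2) ^ ((2 : ℝ) + 1) * Gamma (2 + 1))) :=
        mul_le_mul_of_nonneg_left (Gamma_add_one_le_of_le two_pos ht) (by positivity)
    _ = exp (log 2 * t + log t * (t - 2) + (2 - t) + (log t - log 2) * (2 + 1) + log 2) := by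
        rw [hG3, rpow_def_of_pos two_pos, rpow_def_of_pos ht0,
          rpow_def_of_pos (by positivity : (0:ℝ) < t / 2), log_div ht0.ne' two_ne_zero]
        simp only [exp_add, exp_log two_pos]
        ring
    _ ≤ exp (log 2 * (1 / 2 * t) + log t * t) :=
        exp_le_exp.2 (by
          nlinarith [mul_nonneg (by linarith : 0 ≤ t / 2 - 1) (by linarith : 0 ≤ 1 - log 2)])
    _ = (√2 * t) ^ t := by
        rw [mul_rpow (by positivity) ht0.le, sqrt_eq_rpow, ← rpow_mul zero_le_two,
          rpow_def_of_pos two_pos, rpow_def_of_pos ht0, exp_add]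

end Real

namespace MeasureTheory

theorem lintegral_ofReal_le_lintegral_meas_lt {α : Type*} [MeasurableSpace α] (μ : Measure α)
    (f : α → ℝ) : ∫⁻ a, ENNReal.ofReal (f a) ∂μ ≤ ∫⁻ s in Ioi 0, μ {a | s < f a} := by
  obtain ⟨g, hg, hgf, heq⟩ := exists_measurable_le_lintegral_eq μ fun a => ENNReal.ofReal (f a)
  have hg_top : ∀ a, g a ≠ ∞ := fun a => ne_top_of_le_ne_top ENNReal.ofReal_ne_top (hgf a)
  calc ∫⁻ a, ENNReal.ofReal (f a) ∂μ = ∫⁻ a, ENNReal.ofReal (g a).toReal ∂μ := by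
        simp only [heq, ENNReal.ofReal_toReal (hg_top _)]
    _ = ∫⁻ s in Ioi 0, μ {a | s < (g a).toReal} :=
        lintegral_eq_lintegral_meas_lt μ (ae_of_all _ fun _ => ENNReal.toReal_nonneg)
          hg.ennreal_toReal.aemeasurable
    _ ≤ ∫⁻ s in Ioi 0, μ {a | s < f a} := by
        refine setLIntegral_mono' measurableSet_Ioi fun s (hs : 0 < s) => measure_mono ?_
        intro a (ha : s < (g a).toReal)
        have hgf' : (g a).toReal ≤ max (f a) 0 := ENNReal.toReal_mono ENNReal.ofReal_ne_top (hgf a)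
        exact (lt_max_iff.1 (ha.trans_le hgf')).resolve_right hs.not_gt

theorem lintegral_ofReal_abs_rpow_le_of_meas_lt_le {Ω β : Type*} [MeasurableSpace Ω]
    [MeasurableSpace β] {μ : Measure Ω} {ν : Measure β} {x : Ω → ℝ} {y₁ y₂ : β → ℝ}
    (hy₁ : AEMeasurable y₁ ν) (hy₂ : AEMeasurable y₂ ν) (hy₁_nonneg : 0 ≤ᵐ[ν] y₁)
    (hy₂_nonneg : 0 ≤ᵐ[ν] y₂) {p : ℝ} (hp : 0 < p)
    (h : ∀ r, 0 < r → μ {ω | r < |x ω|} ≤ ν {b | r < y₁ b} + ν {b | r < y₂ b}) :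
    ∫⁻ ω, ENNReal.ofReal (|x ω| ^ p) ∂μ ≤
      ∫⁻ b, ENNReal.ofReal (y₁ b) ^ p ∂ν + ∫⁻ b, ENNReal.ofReal (y₂ b) ^ p ∂ν := by
  have hlayer : ∀ {y : β → ℝ}, AEMeasurable y ν → 0 ≤ᵐ[ν] y →
      ∫⁻ b, ENNReal.ofReal (y b) ^ p ∂ν = ∫⁻ s in Ioi 0, ν {b | s < y b ^ p} := by
    intro y hy hy0
    rw [← lintegral_eq_lintegral_meas_lt ν (hy0.mono fun b hb => rpow_nonneg hb p) (hy.pow_const p)]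
    exact lintegral_congr_ae (hy0.mono fun b hb => ENNReal.ofReal_rpow_of_nonneg hb hp.le)
  have hroot : ∀ {s z : ℝ}, 0 < s → s ^ p⁻¹ < z → s < z ^ p := fun {s z} hs hsz =>
    (rpow_inv_lt_iff_of_pos hs.le ((rpow_nonneg hs.le _).trans hsz.le) hp).1 hsz
  have hanti : ∀ y : β → ℝ, Antitone fun s => ν {b | s < y b ^ p} :=
    fun y s t hst => measure_mono fun b (hb : t < y b ^ p) => hst.trans_lt hb
  calc ∫⁻ ω, ENNReal.ofReal (|x ω| ^ p) ∂μ ≤ ∫⁻ s in Ioi 0, μ {ω | s < |x ω| ^ p} :=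
        lintegral_ofReal_le_lintegral_meas_lt μ _
    _ ≤ ∫⁻ s in Ioi 0, (ν {b | s < y₁ b ^ p} + ν {b | s < y₂ b ^ p}) := by
        refine setLIntegral_mono' measurableSet_Ioi fun s (hs : 0 < s) => ?_
        calc μ {ω | s < |x ω| ^ p} ≤ μ {ω | s ^ p⁻¹ < |x ω|} := measure_mono fun ω hω =>
              (rpow_inv_lt_iff_of_pos hs.le (abs_nonneg _) hp).2 hω
          _ ≤ ν {b | s ^ p⁻¹ < y₁ b} + ν {b | s ^ p⁻¹ < y₂ b} := h _ (rpow_pos_of_pos hs _)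
          _ ≤ ν {b | s < y₁ b ^ p} + ν {b | s < y₂ b ^ p} :=
              add_le_add (measure_mono fun b => hroot hs) (measure_mono fun b => hroot hs)
    _ = ∫⁻ b, ENNReal.ofReal (y₁ b) ^ p ∂ν + ∫⁻ b, ENNReal.ofReal (y₂ b) ^ p ∂ν := by
        rw [lintegral_add_left (hanti y₁).measurable, hlayer hy₁ hy₁_nonneg, hlayer hy₂ hy₂_nonneg]

end MeasureTheory

theorem ENNReal.ofReal_sqrt_rpow {x : ℝ} (hx : 0 ≤ x) (t : ℝ) :
    ENNReal.ofReal √x ^ t = ENNReal.ofReal x ^ (t / 2) := by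
  rw [sqrt_eq_rpow, ← ENNReal.ofReal_rpow_of_nonneg hx (by norm_num), ← ENNReal.rpow_mul]
  ring_nf

theorem ENNReal.lintegral_add_rpow_le {β : Type*} [MeasurableSpace β] {ν : Measure β}
    {f g : β → ℝ≥0∞} (hf : AEMeasurable f ν) (hg : AEMeasurable g ν) {p : ℝ} (hp : 1 ≤ p)
    {a b : ℝ≥0∞} (hfa : ∫⁻ x, f x ^ p ∂ν ≤ a ^ p) (hgb : ∫⁻ x, g x ^ p ∂ν ≤ b ^ p) :
    ∫⁻ x, (f x + g x) ^ p ∂ν ≤ (a + b) ^ p := by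
  have hp0 : 0 < p := zero_lt_one.trans_le hp
  have hmink := ENNReal.lintegral_Lp_add_le hf hg hp
  simp only [one_div, Pi.add_apply] at hmink
  rw [← ENNReal.rpow_inv_le_iff hp0]
  exact hmink.trans (add_le_add ((ENNReal.rpow_inv_le_iff hp0).2 hfa)
    ((ENNReal.rpow_inv_le_iff hp0).2 hgb))

namespace ProbabilityTheory

theorem expMeasure_one_eq :
    expMeasure 1 = (volume.restrict (Ici 0)).withDensity fun u => ENNReal.ofReal (exp (-u)) := by
  rw [← withDensity_indicator measurableSet_Ici]
  refine congrArg volume.withDensity (funext fun u => ?_)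
  change exponentialPDF 1 u = _
  by_cases hu : 0 ≤ u <;> simp [exponentialPDF_eq, hu]

theorem ae_nonneg_expMeasure_one : ∀ᵐ u ∂expMeasure 1, 0 ≤ u := by
  rw [expMeasure_one_eq]
  exact withDensity_absolutelyContinuous _ _ (ae_restrict_mem measurableSet_Ici)

theorem expMeasure_one_Ioi {u : ℝ} (hu : 0 ≤ u) :
    expMeasure 1 (Ioi u) = ENNReal.ofReal (exp (-u)) := by
  rw [expMeasure_one_eq, withDensity_apply _ measurableSet_Ioi,
    Measure.restrict_restrict measurableSet_Ioi, inter_eq_left.2 (Ioi_subset_Ici hu),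
    ← integral_exp_neg_Ioi, ofReal_integral_eq_lintegral_ofReal (integrableOn_exp_neg_Ioi u)
      (Filter.Eventually.of_forall fun _ => (exp_pos _).le)]

theorem lintegral_ofReal_rpow_expMeasure_one {s : ℝ} (hs : 0 ≤ s) :
    ∫⁻ u, ENNReal.ofReal u ^ s ∂expMeasure 1 = ENNReal.ofReal (Gamma (s + 1)) := by
  rw [expMeasure_one_eq, lintegral_withDensity_eq_lintegral_mul _ (by fun_prop) (by fun_prop),
    setLIntegral_congr Ioi_ae_eq_Ici.symm, Gamma_eq_integral (by linarith),
    ofReal_integral_eq_lintegral_ofReal (GammaIntegral_convergent (by linarith)),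
    add_sub_cancel_right]
  · refine setLIntegral_congr_fun measurableSet_Ioi fun u (hu : 0 < u) => ?_
    simp only [Pi.mul_apply]
    rw [ENNReal.ofReal_rpow_of_nonneg hu.le hs, ENNReal.ofReal_mul (exp_pos _).le]
  · filter_upwards [ae_restrict_mem measurableSet_Ioi] with u (hu : 0 < u)
    positivity

/-- For `c < μ {r < x}`, the tail bound at `u₀ = -log c` forces `r < φ u₀`, so `{r < φ}` contains
`Ioi u₀`, of mass `c`. -/
theorem meas_lt_le_expMeasure_one_of_tail {Ω : Type*} [MeasurableSpace Ω] {μ : Measure Ω}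
    [IsProbabilityMeasure μ] {x : Ω → ℝ} {φ : ℝ → ℝ} (hφ : Monotone φ)
    (htail : ∀ u, 0 < u → μ {ω | φ u < x ω} ≤ ENNReal.ofReal (exp (-u))) (r : ℝ) :
    μ {ω | r < x ω} ≤ expMeasure 1 {u | r < φ u} := by
  refine le_of_forall_lt_imp_le_of_dense fun c hc => ?_
  rcases eq_or_ne c 0 with rfl | hc0
  · exact zero_le
  have hc1 : c < 1 := hc.trans_le prob_le_one
  have hc_pos : 0 < c.toReal := ENNReal.toReal_pos hc0 hc1.ne_top
  have hc_lt : c.toReal < 1 := by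
    simpa using (ENNReal.toReal_lt_toReal hc1.ne_top ENNReal.one_ne_top).2 hc1
  set u₀ := -log c.toReal
  have hu₀ : 0 < u₀ := neg_pos.2 (log_neg hc_pos hc_lt)
  have hexp : ENNReal.ofReal (exp (-u₀)) = c := by
    rw [neg_neg, exp_log hc_pos, ENNReal.ofReal_toReal hc1.ne_top]
  have hφu₀ : r < φ u₀ := by
    by_contra! h
    refine hc.not_ge ((measure_mono fun ω (hω : r < x ω) => h.trans_lt hω).trans ?_)
    exact (htail u₀ hu₀).trans hexp.le
  calc c = expMeasure 1 (Ioi u₀) := by rw [expMeasure_one_Ioi hu₀.le, hexp]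
    _ ≤ expMeasure 1 {u | r < φ u} := measure_mono fun v (hv : u₀ < v) => hφu₀.trans_le (hφ hv.le)

theorem lintegral_two_mul_sqrt_rpow_expMeasure_one_le {R t : ℝ} (hR : 0 ≤ R) (ht : 2 ≤ t) :
    ∫⁻ u, ENNReal.ofReal (2 * √(R * u)) ^ t ∂expMeasure 1 ≤ ENNReal.ofReal √(2 * R * t) ^ t := by
  have ht0 : 0 ≤ t := by linarith
  have hsplit : ∀ᵐ u ∂expMeasure 1,
      ENNReal.ofReal (2 * √(R * u)) ^ t =
        ENNReal.ofReal (2 * √R) ^ t * ENNReal.ofReal u ^ (t / 2) := by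
    filter_upwards [ae_nonneg_expMeasure_one] with u hu
    rw [sqrt_mul hR, ← mul_assoc, ENNReal.ofReal_mul (by positivity),
      ENNReal.mul_rpow_of_nonneg _ _ ht0, ENNReal.ofReal_sqrt_rpow hu]
  have hsqrt : √(2 * R * t) = 2 * √R * √(t / 2) := by
    rw [show 2 * R * t = 2 ^ 2 * (R * (t / 2)) by ring, sqrt_mul (by positivity),
      sqrt_sq zero_le_two, sqrt_mul hR, mul_assoc]
  calc ∫⁻ u, ENNReal.ofReal (2 * √(R * u)) ^ t ∂expMeasure 1
      = ENNReal.ofReal (2 * √R) ^ t * ENNReal.ofReal (Gamma (t / 2 + 1)) := by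
        rw [lintegral_congr_ae hsplit, lintegral_const_mul _ (by fun_prop),
          lintegral_ofReal_rpow_expMeasure_one (by linarith)]
    _ ≤ ENNReal.ofReal (2 * √R) ^ t * ENNReal.ofReal ((t / 2) ^ (t / 2)) := by
        gcongr
        exact Gamma_add_one_le_rpow_self (by linarith)
    _ = ENNReal.ofReal √(2 * R * t) ^ t := by
        rw [hsqrt, ENNReal.ofReal_mul (by positivity : (0 : ℝ) ≤ 2 * √R),
          ENNReal.mul_rpow_of_nonneg _ _ ht0, ENNReal.ofReal_sqrt_rpow (by linarith),
          ← ENNReal.ofReal_rpow_of_nonneg (x := t / 2) (by linarith) (by linarith)]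

theorem lintegral_two_mul_rpow_expMeasure_one_le {t : ℝ} (ht : 2 ≤ t) :
    ∫⁻ u, ENNReal.ofReal (2 * u) ^ t ∂expMeasure 1 ≤ ENNReal.ofReal (√2 * t) ^ t := by
  have ht0 : 0 ≤ t := by linarith
  have hsplit : ∀ u, ENNReal.ofReal (2 * u) ^ t = ENNReal.ofReal 2 ^ t * ENNReal.ofReal u ^ t :=
    fun u => by rw [ENNReal.ofReal_mul zero_le_two, ENNReal.mul_rpow_of_nonneg _ _ ht0]
  simp_rw [hsplit]
  rw [lintegral_const_mul _ (by fun_prop), lintegral_ofReal_rpow_expMeasure_one ht0,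
    ENNReal.ofReal_rpow_of_nonneg zero_le_two ht0, ← ENNReal.ofReal_mul (by positivity),
    ENNReal.ofReal_rpow_of_nonneg (by positivity) ht0]
  exact ENNReal.ofReal_le_ofReal (two_rpow_mul_Gamma_add_one_le ht)

theorem lintegral_two_mul_sqrt_add_two_mul_rpow_expMeasure_one_le {R t : ℝ} (hR : 0 ≤ R)
    (ht : 2 ≤ t) :
    ∫⁻ u, ENNReal.ofReal (2 * √(R * u) + 2 * u) ^ t ∂expMeasure 1 ≤
      ENNReal.ofReal (√2 * t + √(2 * R * t)) ^ t := by
  have ht0 : 0 ≤ t := by linarith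
  calc ∫⁻ u, ENNReal.ofReal (2 * √(R * u) + 2 * u) ^ t ∂expMeasure 1
      ≤ ∫⁻ u, (ENNReal.ofReal (2 * √(R * u)) + ENNReal.ofReal (2 * u)) ^ t ∂expMeasure 1 :=
        lintegral_mono fun u => ENNReal.rpow_le_rpow ENNReal.ofReal_add_le ht0
    _ ≤ (ENNReal.ofReal √(2 * R * t) + ENNReal.ofReal (√2 * t)) ^ t :=
        ENNReal.lintegral_add_rpow_le (by fun_prop) (by fun_prop) (by linarith)
          (lintegral_two_mul_sqrt_rpow_expMeasure_one_le hR ht)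
          (lintegral_two_mul_rpow_expMeasure_one_le ht)
    _ = ENNReal.ofReal (√2 * t + √(2 * R * t)) ^ t := by
        rw [add_comm, ← ENNReal.ofReal_add (by positivity) (by positivity)]

end ProbabilityTheory

/-- Laurent–Massart chi-squared tail bounds imply the central
absolute moment bound `E[|Z - R|^t] ≤ 2 (√2 t + √(2 R t))^t` for all `t ≥ 2`. -/
theorem stmt0 {Ω : Type*} [MeasurableSpace Ω] (μ : Measure Ω) [IsProbabilityMeasure μ]
    (R : ℕ) (Z : Ω → ℝ)
    (hupper : ∀ u : ℝ, 0 < u →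
      μ {ω | Z ω - R > 2 * Real.sqrt (R * u) + 2 * u} < ENNReal.ofReal (Real.exp (-u)))
    (hlower : ∀ u : ℝ, 0 < u →
      μ {ω | (R : ℝ) - Z ω > 2 * Real.sqrt (R * u)} < ENNReal.ofReal (Real.exp (-u))) :
    ∀ t : ℝ, 2 ≤ t →
      ∫⁻ ω, ENNReal.ofReal (|Z ω - R| ^ t) ∂μ ≤
        ENNReal.ofReal (2 * (Real.sqrt 2 * t + Real.sqrt (2 * R * t)) ^ t) := by
  intro t ht
  have ht0 : 0 < t := by linarith
  have hR : (0 : ℝ) ≤ R := R.cast_nonneg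
  set φ : ℝ → ℝ := fun u => 2 * √(R * u)
  have hφ : Monotone φ := fun a b hab => by simp only [φ]; gcongr
  have hdom : ∀ r, 0 < r → μ {ω | r < |Z ω - R|} ≤
      expMeasure 1 {u | r < φ u + 2 * u} + expMeasure 1 {u | r < φ u} := fun r _ =>
    calc μ {ω | r < |Z ω - R|} ≤ μ ({ω | r < Z ω - R} ∪ {ω | r < R - Z ω}) :=
          measure_mono fun ω (hω : r < |Z ω - R|) => by simpa [neg_sub] using lt_abs.1 hω
      _ ≤ μ {ω | r < Z ω - R} + μ {ω | r < R - Z ω} := measure_union_le _ _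
      _ ≤ _ := add_le_add
          (meas_lt_le_expMeasure_one_of_tail (hφ.add (monotone_id.const_mul zero_le_two))
            (fun u hu => (hupper u hu).le) r)
          (meas_lt_le_expMeasure_one_of_tail hφ (fun u hu => (hlower u hu).le) r)
  have hφ_nonneg : 0 ≤ᵐ[expMeasure 1] φ := ae_of_all _ fun u => by positivity
  have hφ_add_nonneg : 0 ≤ᵐ[expMeasure 1] fun u => φ u + 2 * u := by
    filter_upwards [ae_nonneg_expMeasure_one] with u hu
    positivity
  calc ∫⁻ ω, ENNReal.ofReal (|Z ω - R| ^ t) ∂μ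
      ≤ ∫⁻ u, ENNReal.ofReal (φ u + 2 * u) ^ t ∂expMeasure 1 +
          ∫⁻ u, ENNReal.ofReal (φ u) ^ t ∂expMeasure 1 :=
        lintegral_ofReal_abs_rpow_le_of_meas_lt_le (by fun_prop) (by fun_prop) hφ_add_nonneg
          hφ_nonneg ht0 hdom
    _ ≤ ENNReal.ofReal (√2 * t + √(2 * R * t)) ^ t + ENNReal.ofReal √(2 * R * t) ^ t :=
        add_le_add (lintegral_two_mul_sqrt_add_two_mul_rpow_expMeasure_one_le hR ht)
          (lintegral_two_mul_sqrt_rpow_expMeasure_one_le hR ht)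
    _ ≤ ENNReal.ofReal (2 * (√2 * t + √(2 * R * t)) ^ t) := by
        rw [ENNReal.ofReal_rpow_of_nonneg (by positivity) ht0.le,
          ENNReal.ofReal_rpow_of_nonneg (by positivity) ht0.le,
          ← ENNReal.ofReal_add (by positivity) (by positivity)]
        have hle : √(2 * R * t) ^ t ≤ (√2 * t + √(2 * R * t)) ^ t :=
          rpow_le_rpow (sqrt_nonneg _) (le_add_of_nonneg_left (by positivity)) ht0.le
        exact ENNReal.ofReal_le_ofReal (by linarith)
end

section
/- If a random matrix Ω ∈ 𝔽^{t×n} satisfies the Strong (ε,δ)-JLM property, then for any s ∈ ℕ, the block-diagonal matrix I_s ⊗ Ω ∈ 𝔽^{ts×ns} also satisfies the Strong (ε,δ)-JLM property. -/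
/-!
Write `x = (x_1, …, x_s)` in blocks. Then `‖(I_s ⊗ Ω)x‖² - ‖x‖² = ∑ᵢ (‖Ωxᵢ‖² - ‖xᵢ‖²)`, and by
homogeneity the `i`-th summand is `‖xᵢ‖²` times the centred variable `‖Ωuᵢ‖² - 1` of a unit
vector `uᵢ`. Taking expectations gives the mean, and Minkowski's inequality in `L^t` bounds the
`t`-th moment by `∑ᵢ ‖xᵢ‖² · B = B`.

The moments of the hypothesis are Bochner integrals, hence `0` outside `L^t`, so Minkowski cannot
be applied blindly. Each summand is bounded below by a constant, so it lies in `L^t` as soon as the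
sum does; and when the sum does not, its moment is `0` and there is nothing to prove.
-/

open MeasureTheory ProbabilityTheory Matrix Kronecker
open scoped ENNReal

/-- The Strong `(ε,δ)`-JLM property of a random matrix over `𝕜 = ℝ` or `ℂ`. -/
def StrongJLM {𝕜 : Type*} [RCLike 𝕜] {Ω : Type*} [MeasurableSpace Ω] (μ : Measure Ω)
    {m n : Type*} [Fintype m] [Fintype n]
    (M : Ω → Matrix m n 𝕜) (ε δ : ℝ) : Prop :=
  ∀ x : n → 𝕜, ∑ j, ‖x j‖ ^ 2 = 1 →
    (∫ ω, ∑ i, ‖(M ω).mulVec x i‖ ^ 2 ∂μ) = 1 ∧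
    ∀ t : ℕ, 2 ≤ t → (t : ℝ) ≤ Real.log (1 / δ) →
      (∫ ω, |(∑ i, ‖(M ω).mulVec x i‖ ^ 2) - 1| ^ (t : ℝ) ∂μ) ^ (1 / (t : ℝ)) ≤
        (ε / Real.exp 1) * Real.sqrt (t / Real.log (1 / δ))

namespace MeasureTheory

variable {Ω : Type*} [MeasurableSpace Ω] {μ : Measure Ω}

lemma lpNorm_natCast_eq_integral_abs_rpow {f : Ω → ℝ} (hf : AEStronglyMeasurable f μ) {p : ℕ}
    (hp : p ≠ 0) : lpNorm f p μ = (∫ ω, |f ω| ^ (p : ℝ) ∂μ) ^ (1 / (p : ℝ)) := by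
  rw [lpNorm_eq_integral_norm_rpow_toReal (by exact_mod_cast hp) (ENNReal.natCast_ne_top p) hf]
  simp [Real.norm_eq_abs]

variable [IsFiniteMeasure μ] {ι : Type*} {s : Finset ι} {f : ι → Ω → ℝ} {c : ι → ℝ} {p : ℝ≥0∞}

lemma memLp_of_memLp_sum_of_forall_le (hf : ∀ i ∈ s, AEStronglyMeasurable (f i) μ)
    (hc : ∀ i ∈ s, ∀ ω, c i ≤ f i ω) (hsum : MemLp (∑ i ∈ s, f i) p μ) :
    ∀ i ∈ s, MemLp (f i) p μ := by
  classical
  intro i hi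
  -- `|f i| ≤ |∑ f| + ∑ |c|`, since `f i = ∑ f - ∑_{j ≠ i} f j ≤ ∑ f - ∑_{j ≠ i} c j`
  refine (hsum.norm.add (memLp_const (∑ j ∈ s, |c j|))).of_le (hf i hi) (.of_forall fun ω => ?_)
  have hsplit := s.add_sum_erase (f · ω) hi
  have hrest : ∑ j ∈ s.erase i, c j ≤ ∑ j ∈ s.erase i, f j ω :=
    Finset.sum_le_sum fun j hj => hc j (Finset.mem_of_mem_erase hj) ω
  have habs : ∀ t ⊆ s, |∑ j ∈ t, c j| ≤ ∑ j ∈ s, |c j| := fun t ht =>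
    (Finset.abs_sum_le_sum_abs _ _).trans
      (Finset.sum_le_sum_of_subset_of_nonneg ht fun _ _ _ => abs_nonneg _)
  have hci := habs {i} (by simpa using hi)
  have hcrest := habs _ (s.erase_subset i)
  simp only [Finset.sum_singleton] at hci
  simp only [Finset.sum_apply, Pi.add_apply, Real.norm_eq_abs] at hsplit ⊢
  rw [abs_le] at hci hcrest ⊢
  rw [abs_of_nonneg (by positivity)]
  constructor <;> linarith [le_abs_self (∑ j ∈ s, f j ω), neg_abs_le (∑ j ∈ s, f j ω), hc i hi ω]

lemma lpNorm_sum_le_of_forall_le (hf : ∀ i ∈ s, AEStronglyMeasurable (f i) μ)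
    (hc : ∀ i ∈ s, ∀ ω, c i ≤ f i ω) (hp : 1 ≤ p) :
    lpNorm (∑ i ∈ s, f i) p μ ≤ ∑ i ∈ s, lpNorm (f i) p μ := by
  by_cases hsum : MemLp (∑ i ∈ s, f i) p μ
  · exact lpNorm_sum_le (memLp_of_memLp_sum_of_forall_le hf hc hsum) hp
  · rw [lpNorm_of_not_memLp hsum]
    exact Finset.sum_nonneg fun _ _ => lpNorm_nonneg

end MeasureTheory

lemma Matrix.curry_kronecker_one_mulVec {R : Type*} [Semiring R] {l m n : Type*} [Fintype l]
    [DecidableEq l] [Fintype n] (N : Matrix m n R) (x : l × n → R) (i : l) :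
    Function.curry ((1 : Matrix l l R) ⊗ₖ N *ᵥ x) i = N *ᵥ Function.curry x i := by
  rw [show x = vec (of fun k i => x (i, k)) from rfl, ← vec_mul_eq_mulVec]
  rfl

section SqNorm

variable {𝕜 : Type*} [RCLike 𝕜] {l m n : Type*} [Fintype l] [Fintype m] [Fintype n]

def sqNorm (v : n → 𝕜) : ℝ := ∑ i, ‖v i‖ ^ 2

lemma sqNorm_eq_norm_toLp_sq (v : n → 𝕜) :
    sqNorm v = ‖(WithLp.toLp 2 v : EuclideanSpace 𝕜 n)‖ ^ 2 := by
  rw [EuclideanSpace.norm_sq_eq]; rfl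

lemma sqNorm_nonneg (v : n → 𝕜) : 0 ≤ sqNorm v := by
  rw [sqNorm_eq_norm_toLp_sq]; positivity

lemma sqNorm_smul (c : 𝕜) (v : n → 𝕜) : sqNorm (c • v) = ‖c‖ ^ 2 * sqNorm v := by
  rw [sqNorm_eq_norm_toLp_sq, sqNorm_eq_norm_toLp_sq, WithLp.toLp_smul, norm_smul, mul_pow]

lemma sqNorm_prod (x : l × n → 𝕜) : sqNorm x = ∑ i, sqNorm (Function.curry x i) :=
  Fintype.sum_prod_type _

lemma sqNorm_kronecker_one_mulVec [DecidableEq l] (N : Matrix m n 𝕜) (x : l × n → 𝕜) :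
    sqNorm ((1 : Matrix l l 𝕜) ⊗ₖ N *ᵥ x) = ∑ i, sqNorm (N *ᵥ Function.curry x i) := by
  simp only [sqNorm_prod, curry_kronecker_one_mulVec]

lemma exists_sqNorm_eq_one_forall_sqNorm_mulVec {y : n → 𝕜} (hy : y ≠ 0) :
    ∃ u, sqNorm u = 1 ∧ ∀ N : Matrix m n 𝕜, sqNorm (N *ᵥ y) = sqNorm y * sqNorm (N *ᵥ u) := by
  set r := ‖(WithLp.toLp 2 y : EuclideanSpace 𝕜 n)‖
  have hr : r ≠ 0 := by simpa [r] using hy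
  refine ⟨((r⁻¹ : ℝ) : 𝕜) • y, ?_, fun N => ?_⟩
  · rw [sqNorm_smul, sqNorm_eq_norm_toLp_sq, RCLike.norm_ofReal, abs_inv, abs_norm, ← mul_pow,
      inv_mul_cancel₀ hr, one_pow]
  · rw [mulVec_smul, sqNorm_smul, RCLike.norm_ofReal, abs_inv, abs_norm, sqNorm_eq_norm_toLp_sq y,
      ← mul_assoc, ← mul_pow, mul_inv_cancel₀ hr, one_pow, one_mul]

end SqNorm

section RandomMatrix

variable {𝕜 : Type*} [RCLike 𝕜] {Ω : Type*} [MeasurableSpace Ω] {μ : Measure Ω}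
  {l m n : Type*} [Fintype l] [DecidableEq l] [Fintype m] [Fintype n] {M : Ω → Matrix m n 𝕜}

lemma integrable_sqNorm_mulVec (h : ∀ u, sqNorm u = 1 → ∫ ω, sqNorm (M ω *ᵥ u) ∂μ = 1)
    (y : n → 𝕜) : Integrable (fun ω => sqNorm (M ω *ᵥ y)) μ := by
  obtain rfl | hy := eq_or_ne y 0
  · simp [sqNorm]
  obtain ⟨u, hu, hMu⟩ := exists_sqNorm_eq_one_forall_sqNorm_mulVec (m := m) hy
  simp_rw [hMu]
  exact (Integrable.of_integral_ne_zero (by simp [h u hu])).const_mul _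

lemma integral_sqNorm_mulVec (h : ∀ u, sqNorm u = 1 → ∫ ω, sqNorm (M ω *ᵥ u) ∂μ = 1)
    (y : n → 𝕜) : ∫ ω, sqNorm (M ω *ᵥ y) ∂μ = sqNorm y := by
  obtain rfl | hy := eq_or_ne y 0
  · simp [sqNorm]
  obtain ⟨u, hu, hMu⟩ := exists_sqNorm_eq_one_forall_sqNorm_mulVec (m := m) hy
  simp_rw [hMu, integral_const_mul, h u hu, mul_one]

lemma lpNorm_sqNorm_mulVec_sub_one_eq (h : ∀ u, sqNorm u = 1 → ∫ ω, sqNorm (M ω *ᵥ u) ∂μ = 1)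
    (y : n → 𝕜) {p : ℕ} (hp : p ≠ 0) :
    lpNorm (fun ω => sqNorm (M ω *ᵥ y) - 1) p μ
      = (∫ ω, |sqNorm (M ω *ᵥ y) - 1| ^ (p : ℝ) ∂μ) ^ (1 / (p : ℝ)) :=
  lpNorm_natCast_eq_integral_abs_rpow
    ((integrable_sqNorm_mulVec h y).aestronglyMeasurable.sub aestronglyMeasurable_const) hp

lemma lpNorm_sqNorm_mulVec_sub_le {p : ℝ≥0∞} {B : ℝ}
    (h : ∀ u, sqNorm u = 1 → lpNorm (fun ω => sqNorm (M ω *ᵥ u) - 1) p μ ≤ B) (y : n → 𝕜) :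
    lpNorm (fun ω => sqNorm (M ω *ᵥ y) - sqNorm y) p μ ≤ sqNorm y * B := by
  obtain rfl | hy := eq_or_ne y 0
  · simp [sqNorm]
  obtain ⟨u, hu, hMu⟩ := exists_sqNorm_eq_one_forall_sqNorm_mulVec (m := m) hy
  have hscale : (fun ω => sqNorm (M ω *ᵥ y) - sqNorm y)
      = sqNorm y • fun ω => sqNorm (M ω *ᵥ u) - 1 := by
    ext ω; simp [hMu, mul_sub]
  rw [hscale, lpNorm_const_smul, coe_nnnorm, Real.norm_of_nonneg (sqNorm_nonneg y)]
  exact mul_le_mul_of_nonneg_left (h u hu) (sqNorm_nonneg y)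

lemma integral_sqNorm_kronecker_one_mulVec
    (h : ∀ u, sqNorm u = 1 → ∫ ω, sqNorm (M ω *ᵥ u) ∂μ = 1) (x : l × n → 𝕜) :
    ∫ ω, sqNorm ((1 : Matrix l l 𝕜) ⊗ₖ M ω *ᵥ x) ∂μ = sqNorm x := by
  simp_rw [sqNorm_kronecker_one_mulVec]
  rw [integral_finsetSum _ fun i _ => integrable_sqNorm_mulVec h _]
  simp_rw [integral_sqNorm_mulVec h, ← sqNorm_prod]

lemma lpNorm_sqNorm_kronecker_one_mulVec_sub_le [IsFiniteMeasure μ] {p : ℝ≥0∞} {B : ℝ}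
    (h : ∀ u, sqNorm u = 1 → ∫ ω, sqNorm (M ω *ᵥ u) ∂μ = 1)
    (hB : ∀ u, sqNorm u = 1 → lpNorm (fun ω => sqNorm (M ω *ᵥ u) - 1) p μ ≤ B) (hp : 1 ≤ p)
    (x : l × n → 𝕜) :
    lpNorm (fun ω => sqNorm ((1 : Matrix l l 𝕜) ⊗ₖ M ω *ᵥ x) - sqNorm x) p μ ≤ sqNorm x * B := by
  have hblocks : (fun ω => sqNorm ((1 : Matrix l l 𝕜) ⊗ₖ M ω *ᵥ x) - sqNorm x)
      = ∑ i, fun ω => sqNorm (M ω *ᵥ Function.curry x i) - sqNorm (Function.curry x i) := by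
    ext ω
    simp [sqNorm_kronecker_one_mulVec, sqNorm_prod x]
  rw [hblocks, sqNorm_prod, Finset.sum_mul]
  refine (lpNorm_sum_le_of_forall_le (c := fun i => -sqNorm (Function.curry x i))
    (fun i _ => (integrable_sqNorm_mulVec h _).aestronglyMeasurable.sub aestronglyMeasurable_const)
    (fun i _ ω => by simp [sqNorm_nonneg]) hp).trans ?_
  exact Finset.sum_le_sum fun i _ => lpNorm_sqNorm_mulVec_sub_le hB _

end RandomMatrix

/-- If `Ω` satisfies the Strong `(ε,δ)`-JLM property then so does the
block-diagonal matrix `I_s ⊗ Ω`. -/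
theorem stmt4 {𝕜 : Type*} [RCLike 𝕜] {Ω : Type*} [MeasurableSpace Ω]
    (μ : Measure Ω) [IsProbabilityMeasure μ]
    {t n : ℕ} (M : Ω → Matrix (Fin t) (Fin n) 𝕜) (ε δ : ℝ)
    (hjlm : StrongJLM μ M ε δ) (s : ℕ) :
    StrongJLM μ (fun ω => (1 : Matrix (Fin s) (Fin s) 𝕜) ⊗ₖ M ω) ε δ := by
  have hmean (u : Fin n → 𝕜) (hu : sqNorm u = 1) : ∫ ω, sqNorm (M ω *ᵥ u) ∂μ = 1 := (hjlm u hu).1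
  have hmean_block (x : Fin s × Fin n → 𝕜) (hx : sqNorm x = 1) :
      ∫ ω, sqNorm ((1 : Matrix (Fin s) (Fin s) 𝕜) ⊗ₖ M ω *ᵥ x) ∂μ = 1 :=
    (integral_sqNorm_kronecker_one_mulVec hmean x).trans hx
  intro x hx
  refine ⟨hmean_block x hx, fun k hk hlog => ?_⟩
  have hk0 : k ≠ 0 := by omega
  have hmoment (u : Fin n → 𝕜) (hu : sqNorm u = 1) :
      lpNorm (fun ω => sqNorm (M ω *ᵥ u) - 1) k μ
        ≤ ε / Real.exp 1 * √(k / Real.log (1 / δ)) := by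
    rw [lpNorm_sqNorm_mulVec_sub_one_eq hmean u hk0]
    exact (hjlm u hu).2 k hk hlog
  have hblock := lpNorm_sqNorm_kronecker_one_mulVec_sub_le hmean hmoment
    (by exact_mod_cast hk.trans' one_le_two) x
  rwa [show sqNorm x = 1 from hx, one_mul, lpNorm_sqNorm_mulVec_sub_one_eq hmean_block x hk0]
    at hblock
end

section
/- Let A ∈ 𝔽^{r₀×n₁×⋯×n_j×r_j} and B ∈ 𝔽^{r_j×n_{j+1}×⋯×n_k×r_k} be tensors and let ⋈ denote the strong Kronecker product. Then the first-mode-group unfolding satisfies (A ⋈ B)^{≤1} = A^{≤1} · (I_{n₁⋯n_j} ⊗ B^{≤1}), where ⊗ is the matrix Kronecker product. -/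
open Matrix Kronecker

/-- The strong Kronecker product of two tensor-train style tensors, with the group of
modes `i₁,…,i_j` abstracted into an index type `I` and the modes `i_{j+1},…,i_k` into `J`. -/
def strongKron {𝕜 : Type*} [CommRing 𝕜] {r0 rj rk : ℕ} {I J : Type*} [Fintype I]
    (A : Fin r0 → I → Fin rj → 𝕜) (B : Fin rj → J → Fin rk → 𝕜) :
    Fin r0 → I → J → Fin rk → 𝕜 :=
  fun a i j c => ∑ α : Fin rj, A a i α * B α j c

/-- `(A ⋈ B)^{≤1} = A^{≤1} · (I_{n₁⋯n_j} ⊗ B^{≤1})`, the first unfolding of a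
strong Kronecker product is the product of the first unfolding of `A` with the Kronecker
product of the identity and the first unfolding of `B`. -/
theorem stmt5 {𝕜 : Type*} [CommRing 𝕜] {r0 rj rk : ℕ} {I J : Type*} [Fintype I] [Fintype J]
    [DecidableEq I]
    (A : Fin r0 → I → Fin rj → 𝕜) (B : Fin rj → J → Fin rk → 𝕜) :
    (Matrix.of fun (a : Fin r0) (x : I × (J × Fin rk)) =>
        strongKron A B a x.1 x.2.1 x.2.2) =
      (Matrix.of fun (a : Fin r0) (p : I × Fin rj) => A a p.1 p.2) *
        ((1 : Matrix I I 𝕜) ⊗ₖ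
          (Matrix.of fun (α : Fin rj) (q : J × Fin rk) => B α q.1 q.2)) := by
  ext a x
  simp [mul_apply, Fintype.sum_prod_type, strongKron, kroneckerMap_apply, Matrix.one_apply, mul_comm, Finset.mul_sum]
end

section
/- Let a, b ∈ 𝔽^N with N = n₁⋯n_d, and let 𝓘 ⊆ {1,…,d}. Then ‖Tr_𝓘(ab*)‖_F² ≤ ‖Tr_𝓘(aa*)‖_F · ‖Tr_𝓘(bb*)‖_F, where Tr_𝓘 is the partial trace over the modes in 𝓘 and ‖·‖_F is the Frobenius norm. -/
open Matrix

variable {d : ℕ} {n : Fin d → ℕ}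

/-- Combine an assignment on the modes in `𝓘` with one on the complementary modes. -/
def glue (𝓘 : Finset (Fin d)) (z : ∀ i : {i : Fin d // i ∈ 𝓘}, Fin (n i.1))
    (x : ∀ i : {i : Fin d // i ∉ 𝓘}, Fin (n i.1)) : ∀ i, Fin (n i) :=
  fun i => if h : i ∈ 𝓘 then z ⟨i, h⟩ else x ⟨i, h⟩

/-- The partial trace over the modes in `𝓘` of a matrix on a `d`-fold tensor product space. -/
def ptrace (𝕜 : Type*) [AddCommMonoid 𝕜] (𝓘 : Finset (Fin d))
    (S : Matrix (∀ i, Fin (n i)) (∀ i, Fin (n i)) 𝕜) :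
    Matrix (∀ i : {i : Fin d // i ∉ 𝓘}, Fin (n i.1))
      (∀ i : {i : Fin d // i ∉ 𝓘}, Fin (n i.1)) 𝕜 :=
  Matrix.of fun x y =>
    ∑ z : ∀ i : {i : Fin d // i ∈ 𝓘}, Fin (n i.1), S (glue 𝓘 z x) (glue 𝓘 z y)

/-- Frobenius norm of a matrix. -/
noncomputable def frob {𝕜 α β : Type*} [RCLike 𝕜] [Fintype α] [Fintype β]
    (M : Matrix α β 𝕜) : ℝ :=
  Real.sqrt (∑ i, ∑ j, ‖M i j‖ ^ 2)

set_option maxHeartbeats 1000000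

lemma sum4_comm {M α β γ δ : Type*} [AddCommMonoid M] [Fintype α] [Fintype β] [Fintype γ]
    [Fintype δ] (f : α → β → γ → δ → M) :
    ∑ x, ∑ y, ∑ z, ∑ z', f x y z z' = ∑ z, ∑ z', ∑ x, ∑ y, f x y z z' :=
  calc ∑ x, ∑ y, ∑ z, ∑ z', f x y z z'
      = ∑ x, ∑ z, ∑ y, ∑ z', f x y z z' :=
        Finset.sum_congr rfl fun x _ => Finset.sum_comm
    _ = ∑ z, ∑ x, ∑ y, ∑ z', f x y z z' := Finset.sum_comm
    _ = ∑ z, ∑ x, ∑ z', ∑ y, f x y z z' :=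
        Finset.sum_congr rfl fun z _ => Finset.sum_congr rfl fun x _ => Finset.sum_comm
    _ = ∑ z, ∑ z', ∑ x, ∑ y, f x y z z' :=
        Finset.sum_congr rfl fun z _ => Finset.sum_comm

lemma key_sum {𝕜 : Type*} [RCLike 𝕜] (𝓘 : Finset (Fin d))
    (u v : (∀ i, Fin (n i)) → 𝕜) :
    ((∑ x, ∑ y, ‖ptrace 𝕜 𝓘 (vecMulVec u (star v)) x y‖ ^ 2 : ℝ) : 𝕜)
      = ∑ z : ∀ i : {i : Fin d // i ∈ 𝓘}, Fin (n i.1),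
          ∑ z' : ∀ i : {i : Fin d // i ∈ 𝓘}, Fin (n i.1),
          (∑ x, u (glue 𝓘 z x) * (starRingEnd 𝕜) (u (glue 𝓘 z' x)))
            * (starRingEnd 𝕜) (∑ y, v (glue 𝓘 z y) * (starRingEnd 𝕜) (v (glue 𝓘 z' y))) := by
  have hE : ∀ x y, ptrace 𝕜 𝓘 (vecMulVec u (star v)) x y
      = ∑ z, u (glue 𝓘 z x) * (starRingEnd 𝕜) (v (glue 𝓘 z y)) := by
    intro x y
    simp [ptrace, vecMulVec_apply, RCLike.star_def]
  calc ((∑ x, ∑ y, ‖ptrace 𝕜 𝓘 (vecMulVec u (star v)) x y‖ ^ 2 : ℝ) : 𝕜)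
      = ∑ x, ∑ y, (∑ z, u (glue 𝓘 z x) * (starRingEnd 𝕜) (v (glue 𝓘 z y)))
          * (starRingEnd 𝕜) (∑ z', u (glue 𝓘 z' x) * (starRingEnd 𝕜) (v (glue 𝓘 z' y))) := by
        push_cast
        refine Finset.sum_congr rfl fun x _ => Finset.sum_congr rfl fun y _ => ?_
        rw [← hE, RCLike.mul_conj]
    _ = ∑ x, ∑ y, ∑ z, ∑ z', (u (glue 𝓘 z x) * (starRingEnd 𝕜) (v (glue 𝓘 z y)))
          * (starRingEnd 𝕜) (u (glue 𝓘 z' x) * (starRingEnd 𝕜) (v (glue 𝓘 z' y))) := by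
        refine Finset.sum_congr rfl fun x _ => Finset.sum_congr rfl fun y _ => ?_
        rw [map_sum, Finset.sum_mul_sum]
    _ = ∑ z, ∑ z', ∑ x, ∑ y, (u (glue 𝓘 z x) * (starRingEnd 𝕜) (v (glue 𝓘 z y)))
          * (starRingEnd 𝕜) (u (glue 𝓘 z' x) * (starRingEnd 𝕜) (v (glue 𝓘 z' y))) :=
        sum4_comm _
    _ = _ := by
        refine Finset.sum_congr rfl fun z _ => Finset.sum_congr rfl fun z' _ => ?_
        rw [map_sum, Finset.sum_mul_sum]
        refine Finset.sum_congr rfl fun x _ => Finset.sum_congr rfl fun y _ => ?_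
        simp only [_root_.map_mul, RCLike.conj_conj]
        ring

/-- Cauchy–Schwarz for partial traces of rank-one matrices:
`‖Tr_𝓘(ab*)‖_F² ≤ ‖Tr_𝓘(aa*)‖_F ‖Tr_𝓘(bb*)‖_F`. -/
theorem stmt6 {𝕜 : Type*} [RCLike 𝕜] (𝓘 : Finset (Fin d))
    (a b : (∀ i, Fin (n i)) → 𝕜) :
    frob (ptrace 𝕜 𝓘 (vecMulVec a (star b))) ^ 2 ≤
      frob (ptrace 𝕜 𝓘 (vecMulVec a (star a))) *
        frob (ptrace 𝕜 𝓘 (vecMulVec b (star b))) := by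
  classical
  set Z := ∀ i : {i : Fin d // i ∈ 𝓘}, Fin (n i.1)
  set A : Z → Z → 𝕜 := fun z z' => ∑ x, a (glue 𝓘 z x) * (starRingEnd 𝕜) (a (glue 𝓘 z' x))
  set B : Z → Z → 𝕜 := fun z z' => ∑ y, b (glue 𝓘 z y) * (starRingEnd 𝕜) (b (glue 𝓘 z' y))
  have hab := key_sum 𝓘 a b
  have haa := key_sum 𝓘 a a
  have hbb := key_sum 𝓘 b b
  have haa' : (∑ x, ∑ y, ‖ptrace 𝕜 𝓘 (vecMulVec a (star a)) x y‖ ^ 2 : ℝ)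
      = ∑ z, ∑ z', ‖A z z'‖ ^ 2 := by
    have : ((∑ x, ∑ y, ‖ptrace 𝕜 𝓘 (vecMulVec a (star a)) x y‖ ^ 2 : ℝ) : 𝕜)
        = ((∑ z, ∑ z', ‖A z z'‖ ^ 2 : ℝ) : 𝕜) := by
      rw [haa]; push_cast
      exact Finset.sum_congr rfl fun z _ => Finset.sum_congr rfl fun z' _ =>
        RCLike.mul_conj (A z z')
    exact_mod_cast this
  have hbb' : (∑ x, ∑ y, ‖ptrace 𝕜 𝓘 (vecMulVec b (star b)) x y‖ ^ 2 : ℝ)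
      = ∑ z, ∑ z', ‖B z z'‖ ^ 2 := by
    have : ((∑ x, ∑ y, ‖ptrace 𝕜 𝓘 (vecMulVec b (star b)) x y‖ ^ 2 : ℝ) : 𝕜)
        = ((∑ z, ∑ z', ‖B z z'‖ ^ 2 : ℝ) : 𝕜) := by
      rw [hbb]; push_cast
      exact Finset.sum_congr rfl fun z _ => Finset.sum_congr rfl fun z' _ =>
        RCLike.mul_conj (B z z')
    exact_mod_cast this
  have hsab : (∑ x, ∑ y, ‖ptrace 𝕜 𝓘 (vecMulVec a (star b)) x y‖ ^ 2 : ℝ)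
      ≤ ∑ z, ∑ z', ‖A z z'‖ * ‖B z z'‖ := by
    calc (∑ x, ∑ y, ‖ptrace 𝕜 𝓘 (vecMulVec a (star b)) x y‖ ^ 2 : ℝ)
        = RCLike.re (∑ z, ∑ z', A z z' * (starRingEnd 𝕜) (B z z')) := by
          rw [← hab, RCLike.ofReal_re]
      _ ≤ ‖∑ z, ∑ z', A z z' * (starRingEnd 𝕜) (B z z')‖ := RCLike.re_le_norm _
      _ ≤ ∑ z, ∑ z', ‖A z z' * (starRingEnd 𝕜) (B z z')‖ :=
          (norm_sum_le _ _).trans (Finset.sum_le_sum fun z _ => norm_sum_le _ _)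
      _ = ∑ z, ∑ z', ‖A z z'‖ * ‖B z z'‖ := by
          simp [norm_mul]
  have hAnn : (0:ℝ) ≤ ∑ z, ∑ z', ‖A z z'‖ ^ 2 :=
    Finset.sum_nonneg fun _ _ => Finset.sum_nonneg fun _ _ => sq_nonneg _
  have hBnn : (0:ℝ) ≤ ∑ z, ∑ z', ‖B z z'‖ ^ 2 :=
    Finset.sum_nonneg fun _ _ => Finset.sum_nonneg fun _ _ => sq_nonneg _
  have hABnn : (0:ℝ) ≤ ∑ z, ∑ z', ‖A z z'‖ * ‖B z z'‖ :=
    Finset.sum_nonneg fun _ _ => Finset.sum_nonneg fun _ _ =>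
      mul_nonneg (norm_nonneg _) (norm_nonneg _)
  have hcs : (∑ z, ∑ z', ‖A z z'‖ * ‖B z z'‖)
      ≤ Real.sqrt (∑ z, ∑ z', ‖A z z'‖ ^ 2) * Real.sqrt (∑ z, ∑ z', ‖B z z'‖ ^ 2) := by
    rw [← Real.sqrt_mul hAnn, Real.le_sqrt hABnn (mul_nonneg hAnn hBnn)]
    rw [show (∑ z, ∑ z', ‖A z z'‖ * ‖B z z'‖)
        = ∑ p : Z × Z, ‖A p.1 p.2‖ * ‖B p.1 p.2‖ from
      (Fintype.sum_prod_type (fun p : Z × Z => ‖A p.1 p.2‖ * ‖B p.1 p.2‖)).symm]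
    rw [show (∑ z, ∑ z', ‖A z z'‖ ^ 2) = ∑ p : Z × Z, ‖A p.1 p.2‖ ^ 2 from
      (Fintype.sum_prod_type (fun p : Z × Z => ‖A p.1 p.2‖ ^ 2)).symm]
    rw [show (∑ z, ∑ z', ‖B z z'‖ ^ 2) = ∑ p : Z × Z, ‖B p.1 p.2‖ ^ 2 from
      (Fintype.sum_prod_type (fun p : Z × Z => ‖B p.1 p.2‖ ^ 2)).symm]
    exact Finset.sum_mul_sq_le_sq_mul_sq _ _ _
  unfold frob
  rw [Real.sq_sqrt (Finset.sum_nonneg fun _ _ => Finset.sum_nonneg fun _ _ => sq_nonneg _)]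
  refine hsab.trans (hcs.trans ?_)
  rw [haa', hbb']
end

section
/- Let Φ be an n_{𝓘ᶜ}×n_{𝓘ᶜ} GUE random matrix and X_𝓘 = P_𝓘 (I_{n_𝓘} ⊗ Φ) P_𝓘ᵀ as above. Then the weak variance of X_𝓘 equals 1: max over unit vectors u ∈ ℂ^N of Var[u* X_𝓘 u] = 1. -/
open MeasureTheory Matrix

variable {d : ℕ} {n : Fin d → ℕ}

/-- `X_𝓘 = P_𝓘 (I_{n_𝓘} ⊗ Φ) P_𝓘ᵀ`: the operator acting as `Φ` on the modes outside `𝓘`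
and as the identity on the modes in `𝓘`, expressed in the original mode ordering. -/
def Xmat (𝓘 : Finset (Fin d))
    (Φ : Matrix (∀ i : {i : Fin d // i ∉ 𝓘}, Fin (n i.1))
      (∀ i : {i : Fin d // i ∉ 𝓘}, Fin (n i.1)) ℂ) :
    Matrix (∀ i, Fin (n i)) (∀ i, Fin (n i)) ℂ :=
  Matrix.of fun p q =>
    if (fun i : {i : Fin d // i ∈ 𝓘} => p i.1) = (fun i : {i : Fin d // i ∈ 𝓘} => q i.1)
    then Φ (fun i : {i : Fin d // i ∉ 𝓘} => p i.1) (fun i : {i : Fin d // i ∉ 𝓘} => q i.1)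
    else 0

/- ### Auxiliary material -/

private lemma mulconj (z : ℂ) : z * (starRingEnd ℂ) z = ((‖z‖ ^ 2 : ℝ) : ℂ) := by
  rw [Complex.mul_conj, Complex.normSq_eq_norm_sq]

private lemma conjmul (z : ℂ) : (starRingEnd ℂ) z * z = ((‖z‖ ^ 2 : ℝ) : ℂ) := by
  rw [mul_comm]; exact mulconj z

private lemma indq {β : Type*} [Fintype β] [DecidableEq β] (M : Matrix β β ℂ) (b₀ : β) :
    star (fun x => if x = b₀ then (1:ℂ) else 0) ⬝ᵥ
      M.mulVec (fun x => if x = b₀ then (1:ℂ) else 0) = M b₀ b₀ := by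
  simp [dotProduct, mulVec, Pi.star_apply, apply_ite (star : ℂ → ℂ), ite_mul, mul_ite,
    Finset.sum_ite_eq']

private lemma ind_dot {β : Type*} [Fintype β] [DecidableEq β] (b₀ : β) :
    star (fun x => if x = b₀ then (1:ℂ) else 0) ⬝ᵥ (fun x => if x = b₀ then (1:ℂ) else 0)
      = 1 := by
  simp [dotProduct, Pi.star_apply, apply_ite (star : ℂ → ℂ), ite_mul, Finset.sum_ite_eq']

private def mrg (𝓘 : Finset (Fin d)) (k : ∀ i : {i : Fin d // i ∈ 𝓘}, Fin (n i.1))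
    (o : ∀ i : {i : Fin d // i ∉ 𝓘}, Fin (n i.1)) : ∀ i, Fin (n i) :=
  fun i => if h : i ∈ 𝓘 then k ⟨i, h⟩ else o ⟨i, h⟩

private lemma mrg_in (𝓘 : Finset (Fin d)) (k : ∀ i : {i : Fin d // i ∈ 𝓘}, Fin (n i.1))
    (o : ∀ i : {i : Fin d // i ∉ 𝓘}, Fin (n i.1)) :
    (fun i : {i : Fin d // i ∈ 𝓘} => mrg 𝓘 k o i.1) = k := by
  funext i; simp [mrg, i.2]

private lemma mrg_out (𝓘 : Finset (Fin d)) (k : ∀ i : {i : Fin d // i ∈ 𝓘}, Fin (n i.1))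
    (o : ∀ i : {i : Fin d // i ∉ 𝓘}, Fin (n i.1)) :
    (fun i : {i : Fin d // i ∉ 𝓘} => mrg 𝓘 k o i.1) = o := by
  funext i; simp [mrg, i.2]

private def mrgEquiv (𝓘 : Finset (Fin d)) :
    ((∀ i : {i : Fin d // i ∈ 𝓘}, Fin (n i.1)) × (∀ i : {i : Fin d // i ∉ 𝓘}, Fin (n i.1)))
      ≃ (∀ i, Fin (n i)) where
  toFun ko := mrg 𝓘 ko.1 ko.2
  invFun p := (fun i => p i.1, fun i => p i.1)
  left_inv ko := by
    obtain ⟨k, o⟩ := ko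
    exact Prod.ext (mrg_in 𝓘 k o) (mrg_out 𝓘 k o)
  right_inv p := by
    funext i; by_cases h : i ∈ 𝓘 <;> simp [mrg, h]

private lemma sum_mrg (𝓘 : Finset (Fin d)) (f : (∀ i, Fin (n i)) → ℂ) :
    ∑ p, f p = ∑ k, ∑ o, f (mrg 𝓘 k o) := by
  rw [← Equiv.sum_comp (mrgEquiv 𝓘) f, Fintype.sum_prod_type]; rfl

private lemma sum_mrg_real (𝓘 : Finset (Fin d)) (f : (∀ i, Fin (n i)) → ℝ) :
    ∑ p, f p = ∑ k, ∑ o, f (mrg 𝓘 k o) := by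
  rw [← Equiv.sum_comp (mrgEquiv 𝓘) f, Fintype.sum_prod_type]; rfl

private lemma Xmat_mrg (𝓘 : Finset (Fin d))
    (Φ0 : Matrix (∀ i : {i : Fin d // i ∉ 𝓘}, Fin (n i.1))
      (∀ i : {i : Fin d // i ∉ 𝓘}, Fin (n i.1)) ℂ)
    (k k' : ∀ i : {i : Fin d // i ∈ 𝓘}, Fin (n i.1))
    (o o' : ∀ i : {i : Fin d // i ∉ 𝓘}, Fin (n i.1)) :
    Xmat 𝓘 Φ0 (mrg 𝓘 k o) (mrg 𝓘 k' o') = if k = k' then Φ0 o o' else 0 := by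
  unfold Xmat
  rw [Matrix.of_apply, mrg_in, mrg_in, mrg_out, mrg_out]

/-- The quadratic form of `Xmat` decomposes as a sum of quadratic forms of `Φ0`. -/
private lemma quad (𝓘 : Finset (Fin d))
    (Φ0 : Matrix (∀ i : {i : Fin d // i ∉ 𝓘}, Fin (n i.1))
      (∀ i : {i : Fin d // i ∉ 𝓘}, Fin (n i.1)) ℂ)
    (u : (∀ i, Fin (n i)) → ℂ) :
    star u ⬝ᵥ (Xmat 𝓘 Φ0).mulVec u =
      ∑ k, star (fun o => u (mrg 𝓘 k o)) ⬝ᵥ Φ0.mulVec (fun o => u (mrg 𝓘 k o)) := by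
  have : star u ⬝ᵥ (Xmat 𝓘 Φ0).mulVec u
      = ∑ p, ∑ q, star (u p) * (Xmat 𝓘 Φ0 p q * u q) := by
    simp [dotProduct, mulVec, Finset.mul_sum]
  rw [this]
  rw [sum_mrg 𝓘 (fun p => ∑ q, star (u p) * (Xmat 𝓘 Φ0 p q * u q))]
  simp only [sum_mrg 𝓘 (fun q => star (u _) * (Xmat 𝓘 Φ0 _ q * u q))]
  simp only [Xmat_mrg, mul_ite, ite_mul, mul_zero, zero_mul, Finset.sum_ite_irrel,
    Finset.sum_const_zero, Finset.sum_ite_eq, Finset.mem_univ, if_true]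
  simp [dotProduct, mulVec, Finset.mul_sum]

/-- Abstract second-moment/variance bound: if `Z = ∑ k, S k` with each `S k` square
integrable with second moment `(c k)^2` and `∑ c k = 1`, then `Var[Z] ≤ 1`. -/
private lemma var_le {Ω : Type*} [MeasurableSpace Ω] (μ : Measure Ω) [IsProbabilityMeasure μ]
    {ι : Type*} [Fintype ι] (S : ι → Ω → ℂ) (c : ι → ℝ)
    (hc0 : ∀ k, 0 ≤ c k) (hcsum : ∑ k, c k = 1)
    (hS0 : ∀ k, c k = 0 → ∀ ω, S k ω = 0)
    (hS2i : ∀ k, Integrable (fun ω => ‖S k ω‖ ^ 2) μ)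
    (hS2v : ∀ k, ∫ ω, ‖S k ω‖ ^ 2 ∂μ = c k ^ 2) :
    ∫ ω, ‖(∑ k, S k ω) - ∫ ω', ∑ k, S k ω' ∂μ‖ ^ 2 ∂μ ≤ 1 := by
  classical
  -- the dominating function
  have hgint : Integrable (fun ω => ∑ k, (c k)⁻¹ * ‖S k ω‖ ^ 2) μ :=
    integrable_finset_sum _ (fun k _ => (hS2i k).const_mul _)
  have hgval : ∫ ω, (∑ k, (c k)⁻¹ * ‖S k ω‖ ^ 2) ∂μ = 1 := by
    rw [integral_finset_sum _ (fun k _ => (hS2i k).const_mul _)]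
    have h1 : ∀ k, ∫ ω, (c k)⁻¹ * ‖S k ω‖ ^ 2 ∂μ = c k := by
      intro k
      rw [integral_const_mul, hS2v k]
      by_cases hk : c k = 0
      · simp [hk]
      · rw [sq, ← mul_assoc, inv_mul_cancel₀ hk, one_mul]
    rw [Finset.sum_congr rfl fun k _ => h1 k, hcsum]
  have hpt : ∀ ω, ‖∑ k, S k ω‖ ^ 2 ≤ ∑ k, (c k)⁻¹ * ‖S k ω‖ ^ 2 := by
    intro ω
    have h1 : ‖∑ k, S k ω‖ ≤ ∑ k, ‖S k ω‖ := norm_sum_le _ _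
    have hcs := Finset.sum_mul_sq_le_sq_mul_sq Finset.univ (fun k => Real.sqrt (c k))
      (fun k => Real.sqrt ((c k)⁻¹) * ‖S k ω‖)
    have heq : ∀ k, Real.sqrt (c k) * (Real.sqrt ((c k)⁻¹) * ‖S k ω‖) = ‖S k ω‖ := by
      intro k
      by_cases hk : c k = 0
      · simp [hS0 k hk ω, hk]
      · rw [← mul_assoc, ← Real.sqrt_mul (hc0 k), mul_inv_cancel₀ hk, Real.sqrt_one, one_mul]
    rw [Finset.sum_congr rfl (fun k _ => heq k)] at hcs
    have h2 : (∑ k, ‖S k ω‖) ^ 2 ≤ ∑ k, (c k)⁻¹ * ‖S k ω‖ ^ 2 := by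
      calc (∑ k, ‖S k ω‖) ^ 2
          ≤ (∑ k, Real.sqrt (c k) ^ 2) * ∑ k, (Real.sqrt ((c k)⁻¹) * ‖S k ω‖) ^ 2 := hcs
        _ = (∑ k, c k) * ∑ k, (c k)⁻¹ * ‖S k ω‖ ^ 2 := by
            have e1 : ∑ k, Real.sqrt (c k) ^ 2 = ∑ k, c k :=
              Finset.sum_congr rfl fun k _ => Real.sq_sqrt (hc0 k)
            have e2 : ∑ k, (Real.sqrt ((c k)⁻¹) * ‖S k ω‖) ^ 2
                = ∑ k, (c k)⁻¹ * ‖S k ω‖ ^ 2 := by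
              refine Finset.sum_congr rfl fun k _ => ?_
              rw [mul_pow, Real.sq_sqrt (inv_nonneg.mpr (hc0 k))]
            rw [e1, e2]
        _ = ∑ k, (c k)⁻¹ * ‖S k ω‖ ^ 2 := by rw [hcsum, one_mul]
    calc ‖∑ k, S k ω‖ ^ 2 ≤ (∑ k, ‖S k ω‖) ^ 2 := pow_le_pow_left₀ (norm_nonneg _) h1 2
      _ ≤ _ := h2
  by_cases hZi : Integrable (fun ω => ∑ k, S k ω) μ
  · have hZ2 : Integrable (fun ω => ‖∑ k, S k ω‖ ^ 2) μ := by
      refine Integrable.mono' hgint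
        ((hZi.aemeasurable.norm.pow_const 2).aestronglyMeasurable)
        (Filter.Eventually.of_forall fun ω => ?_)
      rw [Real.norm_eq_abs, abs_of_nonneg (by positivity)]
      exact hpt ω
    set m := ∫ ω', ∑ k, S k ω' ∂μ with hm
    have hptw : ∀ ω, ‖(∑ k, S k ω) - m‖ ^ 2
        = ‖∑ k, S k ω‖ ^ 2 - 2 * ((starRingEnd ℂ) m * ∑ k, S k ω).re + ‖m‖ ^ 2 := by
      intro ω
      set z := ∑ k, S k ω
      have hz : ‖z - m‖ ^ 2 = Complex.normSq (z - m) := by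
        rw [Complex.normSq_eq_norm_sq]
      have hz1 : ‖z‖ ^ 2 = Complex.normSq z := by rw [Complex.normSq_eq_norm_sq]
      have hz2 : ‖m‖ ^ 2 = Complex.normSq m := by rw [Complex.normSq_eq_norm_sq]
      rw [hz, hz1, hz2]
      simp only [Complex.normSq_apply, Complex.sub_re, Complex.sub_im, Complex.mul_re,
        Complex.conj_re, Complex.conj_im]
      ring
    have hint2 : Integrable (fun ω => ((starRingEnd ℂ) m * ∑ k, S k ω).re) μ := by
      have := (hZi.const_mul ((starRingEnd ℂ) m)).re
      simpa only [RCLike.re_to_complex] using this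
    have hre : ∫ ω, ((starRingEnd ℂ) m * ∑ k, S k ω).re ∂μ = ‖m‖ ^ 2 := by
      have h2 := integral_re (hZi.const_mul ((starRingEnd ℂ) m))
      simp only [RCLike.re_to_complex] at h2
      rw [h2, integral_const_mul, ← hm, conjmul m, Complex.ofReal_re]
    calc ∫ ω, ‖(∑ k, S k ω) - m‖ ^ 2 ∂μ
        = ∫ ω, (‖∑ k, S k ω‖ ^ 2 - 2 * ((starRingEnd ℂ) m * ∑ k, S k ω).re + ‖m‖ ^ 2) ∂μ := by
          exact integral_congr_ae (Filter.Eventually.of_forall fun ω => hptw ω)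
      _ = (∫ ω, (‖∑ k, S k ω‖ ^ 2 - 2 * ((starRingEnd ℂ) m * ∑ k, S k ω).re) ∂μ)
            + ∫ _ω, ‖m‖ ^ 2 ∂μ := by
          have hmul : Integrable (fun ω => 2 * ((starRingEnd ℂ) m * ∑ k, S k ω).re) μ :=
            hint2.const_mul 2
          have hsub : Integrable
              (fun ω => ‖∑ k, S k ω‖ ^ 2 - 2 * ((starRingEnd ℂ) m * ∑ k, S k ω).re) μ :=
            hZ2.sub hmul
          rw [integral_add hsub (integrable_const _)]
      _ = (∫ ω, ‖∑ k, S k ω‖ ^ 2 ∂μ) - 2 * ‖m‖ ^ 2 + ‖m‖ ^ 2 := by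
          have hmul : Integrable (fun ω => 2 * ((starRingEnd ℂ) m * ∑ k, S k ω).re) μ :=
            hint2.const_mul 2
          rw [integral_sub hZ2 hmul, integral_const_mul, hre, integral_const]
          simp
      _ = (∫ ω, ‖∑ k, S k ω‖ ^ 2 ∂μ) - ‖m‖ ^ 2 := by ring
      _ ≤ ∫ ω, ‖∑ k, S k ω‖ ^ 2 ∂μ := by nlinarith [sq_nonneg ‖m‖]
      _ ≤ ∫ ω, (∑ k, (c k)⁻¹ * ‖S k ω‖ ^ 2) ∂μ :=
          integral_mono hZ2 hgint hpt
      _ = 1 := hgval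
  · rw [integral_undef hZi]
    simp only [sub_zero]
    calc ∫ ω, ‖∑ k, S k ω‖ ^ 2 ∂μ
        ≤ ∫ ω, (∑ k, (c k)⁻¹ * ‖S k ω‖ ^ 2) ∂μ :=
          integral_mono_of_nonneg (Filter.Eventually.of_forall fun ω => by positivity)
            hgint (Filter.Eventually.of_forall hpt)
      _ = 1 := hgval

/-- Second moment of a GUE quadratic form. -/
private lemma moment {Ω β : Type*} [MeasurableSpace Ω] [Fintype β] {μ : Measure Ω}
    {Φ : Ω → Matrix β β ℂ} (a : β → ℂ)
    (hgue : ∫ ω, (star a ⬝ᵥ (Φ ω).mulVec a) * (starRingEnd ℂ) (star a ⬝ᵥ (Φ ω).mulVec a) ∂μ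
      = ((‖star a ⬝ᵥ a‖ ^ 2 : ℝ) : ℂ)) :
    Integrable (fun ω => ‖star a ⬝ᵥ (Φ ω).mulVec a‖ ^ 2) μ ∧
      ∫ ω, ‖star a ⬝ᵥ (Φ ω).mulVec a‖ ^ 2 ∂μ = (∑ o, ‖a o‖ ^ 2) ^ 2 := by
  have hsa : star a ⬝ᵥ a = ((∑ o, ‖a o‖ ^ 2 : ℝ) : ℂ) := by
    push_cast
    simp only [dotProduct, Pi.star_apply, RCLike.star_def]
    refine Finset.sum_congr rfl fun o _ => ?_
    rw [mul_comm, Complex.mul_conj, Complex.normSq_eq_norm_sq]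
    norm_num
  have hg : ∫ ω, ((‖star a ⬝ᵥ (Φ ω).mulVec a‖ ^ 2 : ℝ) : ℂ) ∂μ
      = (((∑ o, ‖a o‖ ^ 2) ^ 2 : ℝ) : ℂ) := by
    calc ∫ ω, ((‖star a ⬝ᵥ (Φ ω).mulVec a‖ ^ 2 : ℝ) : ℂ) ∂μ
        = ∫ ω, (star a ⬝ᵥ (Φ ω).mulVec a) *
            (starRingEnd ℂ) (star a ⬝ᵥ (Φ ω).mulVec a) ∂μ :=
          integral_congr_ae (Filter.Eventually.of_forall fun ω => (mulconj _).symm)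
      _ = ((‖star a ⬝ᵥ a‖ ^ 2 : ℝ) : ℂ) := hgue
      _ = _ := by rw [hsa, Complex.norm_real, Real.norm_eq_abs, sq_abs]
  have hval : ∫ ω, ‖star a ⬝ᵥ (Φ ω).mulVec a‖ ^ 2 ∂μ = (∑ o, ‖a o‖ ^ 2) ^ 2 := by
    rw [show ∫ ω, ((‖star a ⬝ᵥ (Φ ω).mulVec a‖ ^ 2 : ℝ) : ℂ) ∂μ
        = ((∫ ω, ‖star a ⬝ᵥ (Φ ω).mulVec a‖ ^ 2 ∂μ : ℝ) : ℂ) from integral_ofReal] at hg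
    exact_mod_cast hg
  refine ⟨?_, hval⟩
  by_cases hi : Integrable (fun ω => ‖star a ⬝ᵥ (Φ ω).mulVec a‖ ^ 2) μ
  · exact hi
  · rw [integral_undef hi] at hval
    have hck : (∑ o, ‖a o‖ ^ 2) = 0 :=
      pow_eq_zero_iff (n := 2) (by norm_num) |>.mp hval.symm
    have ha0 : a = 0 := by
      funext o
      have h0 := (Finset.sum_eq_zero_iff_of_nonneg
        (fun o (_ : o ∈ Finset.univ) => by positivity)).mp hck o (Finset.mem_univ o)
      simpa using h0
    refine absurd ?_ hi
    have hz : (fun ω => ‖star a ⬝ᵥ (Φ ω).mulVec a‖ ^ 2) = fun _ => (0:ℝ) := by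
      funext ω; rw [ha0]; simp
    rw [hz]
    exact integrable_zero _ _ _

/-- the weak variance of `X_𝓘` equals `1`: the maximum over unit vectors
`u ∈ ℂ^N` of `Var[u* X_𝓘 u]` is exactly `1`. -/
theorem stmt15 {Ω : Type*} [MeasurableSpace Ω] (μ : Measure Ω) [IsProbabilityMeasure μ]
    (hn : ∀ i, 0 < n i) (𝓘 : Finset (Fin d))
    (Φ : Ω → Matrix (∀ i : {i : Fin d // i ∉ 𝓘}, Fin (n i.1))
      (∀ i : {i : Fin d // i ∉ 𝓘}, Fin (n i.1)) ℂ)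
    (hherm : ∀ ω, (Φ ω).IsHermitian)
    (hmean : ∀ x y, ∫ ω, Φ ω x y ∂μ = 0)
    (hgue : ∀ a b : (∀ i : {i : Fin d // i ∉ 𝓘}, Fin (n i.1)) → ℂ,
      ∫ ω, (star a ⬝ᵥ (Φ ω).mulVec a) * (starRingEnd ℂ) (star b ⬝ᵥ (Φ ω).mulVec b) ∂μ =
        ((‖star a ⬝ᵥ b‖ ^ 2 : ℝ) : ℂ)) :
    IsGreatest
      {v : ℝ | ∃ u : (∀ i, Fin (n i)) → ℂ, (∑ p, ‖u p‖ ^ 2 = 1) ∧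
        v = ∫ ω, ‖(star u ⬝ᵥ (Xmat 𝓘 (Φ ω)).mulVec u) -
              ∫ ω', star u ⬝ᵥ (Xmat 𝓘 (Φ ω')).mulVec u ∂μ‖ ^ 2 ∂μ}
      1 := by
  classical
  constructor
  · -- membership: the indicator of a single point achieves variance 1
    refine ⟨fun p => if p = (fun i => ⟨0, hn i⟩) then (1:ℂ) else 0, ?_, ?_⟩
    · have h : ∀ p : (∀ i, Fin (n i)),
          ‖(if p = (fun i => (⟨0, hn i⟩ : Fin (n i))) then (1:ℂ) else 0)‖ ^ 2
            = if p = (fun i => (⟨0, hn i⟩ : Fin (n i))) then (1:ℝ) else 0 := by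
        intro p; split <;> simp
      rw [Finset.sum_congr rfl fun p _ => h p]
      simp [Finset.sum_ite_eq']
    · set p₀ : ∀ i, Fin (n i) := fun i => ⟨0, hn i⟩ with hp₀
      set x₀ : ∀ i : {i : Fin d // i ∉ 𝓘}, Fin (n i.1) := fun i => p₀ i.1 with hx₀
      have hZ0 : ∀ ω, star (fun p => if p = p₀ then (1:ℂ) else 0) ⬝ᵥ
          (Xmat 𝓘 (Φ ω)).mulVec (fun p => if p = p₀ then (1:ℂ) else 0) = Φ ω x₀ x₀ := by
        intro ω
        rw [indq (Xmat 𝓘 (Φ ω)) p₀]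
        simp [Xmat, hx₀]
      simp only [hZ0, hmean x₀ x₀, sub_zero]
      have hpt : ∀ ω, ((‖Φ ω x₀ x₀‖ ^ 2 : ℝ) : ℂ)
          = (star (fun y => if y = x₀ then (1:ℂ) else 0) ⬝ᵥ
              (Φ ω).mulVec (fun y => if y = x₀ then (1:ℂ) else 0)) *
            (starRingEnd ℂ) (star (fun y => if y = x₀ then (1:ℂ) else 0) ⬝ᵥ
              (Φ ω).mulVec (fun y => if y = x₀ then (1:ℂ) else 0)) := fun ω => by
        rw [indq (Φ ω) x₀, mulconj]
      have hg : ∫ ω, ((‖Φ ω x₀ x₀‖ ^ 2 : ℝ) : ℂ) ∂μ = ((1:ℝ) : ℂ) := by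
        calc ∫ ω, ((‖Φ ω x₀ x₀‖ ^ 2 : ℝ) : ℂ) ∂μ
            = ∫ ω, (star (fun y => if y = x₀ then (1:ℂ) else 0) ⬝ᵥ
                (Φ ω).mulVec (fun y => if y = x₀ then (1:ℂ) else 0)) *
                (starRingEnd ℂ) (star (fun y => if y = x₀ then (1:ℂ) else 0) ⬝ᵥ
                (Φ ω).mulVec (fun y => if y = x₀ then (1:ℂ) else 0)) ∂μ :=
              integral_congr_ae (Filter.Eventually.of_forall hpt)
          _ = ((‖star (fun y => if y = x₀ then (1:ℂ) else 0) ⬝ᵥ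
                (fun y => if y = x₀ then (1:ℂ) else 0)‖ ^ 2 : ℝ) : ℂ) := hgue _ _
          _ = ((1:ℝ) : ℂ) := by rw [ind_dot]; norm_num
      rw [show ∫ ω, ((‖Φ ω x₀ x₀‖ ^ 2 : ℝ) : ℂ) ∂μ
          = ((∫ ω, ‖Φ ω x₀ x₀‖ ^ 2 ∂μ : ℝ) : ℂ) from integral_ofReal] at hg
      exact_mod_cast hg.symm
  · -- upper bound
    rintro v ⟨u, hu, rfl⟩
    simp only [quad 𝓘]
    refine var_le μ (fun k ω => star (fun o => u (mrg 𝓘 k o)) ⬝ᵥ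
        (Φ ω).mulVec (fun o => u (mrg 𝓘 k o)))
      (fun k => ∑ o, ‖u (mrg 𝓘 k o)‖ ^ 2)
      (fun k => Finset.sum_nonneg fun o _ => by positivity)
      (by rw [← sum_mrg_real 𝓘 (fun p => ‖u p‖ ^ 2)]; exact hu)
      ?_ ?_ ?_
    · -- hS0
      intro k hk ω
      show star (fun o => u (mrg 𝓘 k o)) ⬝ᵥ (Φ ω).mulVec (fun o => u (mrg 𝓘 k o)) = 0
      have ha : (fun o => u (mrg 𝓘 k o)) = 0 := by
        funext o
        have h0 := (Finset.sum_eq_zero_iff_of_nonneg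
          (fun o (_ : o ∈ Finset.univ) => by positivity)).mp hk o (Finset.mem_univ o)
        simpa using h0
      rw [ha]
      simp
    · exact fun k => (moment (fun o => u (mrg 𝓘 k o))
        (hgue (fun o => u (mrg 𝓘 k o)) (fun o => u (mrg 𝓘 k o)))).1
    · exact fun k => (moment (fun o => u (mrg 𝓘 k o))
        (hgue (fun o => u (mrg 𝓘 k o)) (fun o => u (mrg 𝓘 k o)))).2
end

section
/- Let Ω ∈ 𝔽^{k×N} be a random matrix that, with probability at least 1 − δ/2, satisfies σ_min²(ΩV₁) ≥ α for the matrix V₁ of top r right singular vectors of a fixed matrix A ∈ 𝔽^{m×N}, and that satisfies the (ε_amm, δ/2)-approximate matrix multiplication property: for any matrices X, Y with N rows, P(‖(ΩX)*(ΩY) − X*Y‖_F > ε_amm·‖X‖_F·‖Y‖_F) < δ/2. Then with probability at least 1 − δ, the orthogonal projector QQ* onto the column space of AΩ* satisfies ‖A − QQ*A‖_F² ≤ (1 + r·ε_amm²/α²)·‖A − A_r‖_F², where A_r is the best rank-r approximation of A. -/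
open MeasureTheory Matrix

section helpers

variable {𝕜 α β γ : Type*} [RCLike 𝕜] [Fintype α] [Fintype β] [Fintype γ]

lemma frob_nonneg (M : Matrix α β 𝕜) : 0 ≤ frob M := Real.sqrt_nonneg _

lemma frob_sq (M : Matrix α β 𝕜) : frob M ^ 2 = ∑ i, ∑ j, ‖M i j‖ ^ 2 :=
  Real.sq_sqrt (by positivity)

lemma norm_sq_eq' (z : 𝕜) : ‖z‖ ^ 2 = RCLike.re z * RCLike.re z + RCLike.im z * RCLike.im z := by
  rw [← RCLike.normSq_eq_def', RCLike.normSq_apply]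

lemma frob_sq_eq_re_trace (M : Matrix α β 𝕜) :
    frob M ^ 2 = RCLike.re (trace (Mᴴ * M)) := by
  rw [frob_sq]
  simp only [trace, diag, mul_apply, conjTranspose_apply, map_sum]
  rw [Finset.sum_comm]
  simp [norm_sq_eq']

lemma frob_conjTranspose (M : Matrix α β 𝕜) : frob Mᴴ = frob M := by
  unfold frob
  congr 1
  rw [Finset.sum_comm]
  simp [conjTranspose_apply]

lemma frob_neg (M : Matrix α β 𝕜) : frob (-M) = frob M := by
  unfold frob; simp

lemma frob_pythagoras (M N : Matrix α β 𝕜) (h : trace (Mᴴ * N) = 0) :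
    frob (M + N) ^ 2 = frob M ^ 2 + frob N ^ 2 := by
  have h2 : trace (Nᴴ * M) = 0 := by
    have e : (Mᴴ * N)ᴴ = Nᴴ * M := by simp [conjTranspose_mul]
    rw [← e, trace_conjTranspose, h, star_zero]
  rw [frob_sq_eq_re_trace, frob_sq_eq_re_trace, frob_sq_eq_re_trace]
  rw [conjTranspose_add, Matrix.add_mul, Matrix.mul_add, Matrix.mul_add, trace_add, trace_add,
    trace_add, h, h2]
  simp

lemma frob_mul_isometry [DecidableEq γ] (X : Matrix α γ 𝕜) (V : Matrix β γ 𝕜) (hV : Vᴴ * V = 1) :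
    frob (X * Vᴴ) ^ 2 = frob X ^ 2 := by
  rw [frob_sq_eq_re_trace, frob_sq_eq_re_trace, conjTranspose_mul, conjTranspose_conjTranspose]
  have : V * Xᴴ * (X * Vᴴ) = V * (Xᴴ * X * Vᴴ) := by
    simp [Matrix.mul_assoc]
  rw [this, trace_mul_comm, Matrix.mul_assoc, hV, Matrix.mul_one]

lemma frob_isometry_sq [DecidableEq γ] (V : Matrix β γ 𝕜) (hV : Vᴴ * V = 1) :
    frob V ^ 2 = Fintype.card γ := by
  rw [frob_sq_eq_re_trace, hV, trace_one]
  simp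

lemma frob_proj_le (P : Matrix α α 𝕜) (hP1 : Pᴴ = P) (hP2 : P * P = P)
    (M : Matrix α β 𝕜) : frob (M - P * M) ^ 2 ≤ frob M ^ 2 := by
  have hdecomp : M = P * M + (M - P * M) := by abel
  have horth : trace ((P * M)ᴴ * (M - P * M)) = 0 := by
    have : (P * M)ᴴ * (M - P * M) = Mᴴ * (Pᴴ * M - Pᴴ * (P * M)) := by
      rw [conjTranspose_mul, Matrix.mul_sub, Matrix.mul_sub]
      rw [Matrix.mul_assoc, Matrix.mul_assoc]
    rw [this, hP1, ← Matrix.mul_assoc, hP2, sub_self, Matrix.mul_zero, trace_zero]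
  calc frob (M - P * M) ^ 2 ≤ frob (P * M) ^ 2 + frob (M - P * M) ^ 2 := by
        nlinarith [frob_nonneg (P * M)]
    _ = frob M ^ 2 := by rw [← frob_pythagoras _ _ horth, ← hdecomp]

lemma norm_mulVec_sq (B : Matrix α γ 𝕜) (v : γ → 𝕜) :
    ∑ j, ‖(B *ᵥ v) j‖ ^ 2 = RCLike.re (star v ⬝ᵥ ((Bᴴ * B) *ᵥ v)) := by
  have e1 : star (B *ᵥ v) ⬝ᵥ (B *ᵥ v) = star v ⬝ᵥ ((Bᴴ * B) *ᵥ v) := by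
    rw [star_mulVec, ← Matrix.dotProduct_mulVec, Matrix.mulVec_mulVec]
  rw [← e1]
  simp only [dotProduct, Pi.star_apply, map_sum]
  congr 1; ext j
  rw [show star ((B *ᵥ v) j) * (B *ᵥ v) j = (starRingEnd 𝕜) ((B *ᵥ v) j) * (B *ᵥ v) j from rfl,
    RCLike.conj_mul]
  norm_cast

variable [DecidableEq γ]

lemma gram_isUnit {α' : ℝ} (hα : 0 < α') (B : Matrix α γ 𝕜)
    (h1 : ∀ u : γ → 𝕜, α' * ∑ i, ‖u i‖ ^ 2 ≤ ∑ j, ‖(B *ᵥ u) j‖ ^ 2) :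
    IsUnit (Bᴴ * B).det := by
  rw [isUnit_iff_ne_zero]
  intro hdet
  obtain ⟨v, hv, hv0⟩ := (Matrix.exists_mulVec_eq_zero_iff).2 hdet
  have h2 := h1 v
  rw [norm_mulVec_sq, hv0] at h2
  simp only [dotProduct_zero, map_zero] at h2
  have hpos : 0 < ∑ i, ‖v i‖ ^ 2 := by
    obtain ⟨i, hi⟩ := Function.ne_iff.1 hv
    have hni : 0 < ‖v i‖ := norm_pos_iff.2 hi
    have : 0 < ‖v i‖ ^ 2 := by positivity
    exact Finset.sum_pos' (fun j _ => by positivity) ⟨i, Finset.mem_univ i, this⟩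
  nlinarith

lemma inv_gram_bound {α' : ℝ} (hα : 0 < α') (B : Matrix α γ 𝕜)
    (h1 : ∀ u : γ → 𝕜, α' * ∑ i, ‖u i‖ ^ 2 ≤ ∑ j, ‖(B *ᵥ u) j‖ ^ 2)
    (u : γ → 𝕜) :
    ∑ j, ‖((Bᴴ * B)⁻¹ *ᵥ u) j‖ ^ 2 ≤ (1 / α' ^ 2) * ∑ i, ‖u i‖ ^ 2 := by
  set G := (Bᴴ * B)⁻¹ with hGdef
  set w := G *ᵥ u with hw
  have hSG : (Bᴴ * B) * G = 1 := Matrix.mul_nonsing_inv _ (gram_isUnit hα B h1)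
  have hSw : (Bᴴ * B) *ᵥ w = u := by
    rw [hw, Matrix.mulVec_mulVec, hSG, Matrix.one_mulVec]
  have key : α' * ∑ i, ‖w i‖ ^ 2 ≤ RCLike.re (star w ⬝ᵥ u) := by
    have h2 := h1 w
    rw [show ∑ j, ‖(B *ᵥ w) j‖ ^ 2 = RCLike.re (star w ⬝ᵥ ((Bᴴ * B) *ᵥ w)) from
      norm_mulVec_sq B w, hSw] at h2
    exact h2
  have cs : RCLike.re (star w ⬝ᵥ u) ≤
      Real.sqrt (∑ i, ‖w i‖ ^ 2) * Real.sqrt (∑ i, ‖u i‖ ^ 2) := by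
    have h3 : RCLike.re (star w ⬝ᵥ u) ≤ ∑ i, ‖w i‖ * ‖u i‖ := by
      calc RCLike.re (star w ⬝ᵥ u) ≤ ‖star w ⬝ᵥ u‖ := RCLike.re_le_norm _
        _ ≤ ∑ i, ‖star (w i) * u i‖ := (norm_sum_le _ _)
        _ = ∑ i, ‖w i‖ * ‖u i‖ := by simp [norm_mul]
    have h4 : (∑ i, ‖w i‖ * ‖u i‖) ^ 2 ≤ (∑ i, ‖w i‖ ^ 2) * ∑ i, ‖u i‖ ^ 2 :=
      Finset.sum_mul_sq_le_sq_mul_sq _ _ _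
    have h5 : (0:ℝ) ≤ ∑ i, ‖w i‖ * ‖u i‖ :=
      Finset.sum_nonneg fun i _ => by positivity
    calc RCLike.re (star w ⬝ᵥ u) ≤ ∑ i, ‖w i‖ * ‖u i‖ := h3
      _ = Real.sqrt ((∑ i, ‖w i‖ * ‖u i‖) ^ 2) := (Real.sqrt_sq h5).symm
      _ ≤ Real.sqrt ((∑ i, ‖w i‖ ^ 2) * ∑ i, ‖u i‖ ^ 2) := Real.sqrt_le_sqrt h4
      _ = _ := by
          rw [Real.sqrt_mul (by positivity)]
  set s := ∑ i, ‖w i‖ ^ 2 with hs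
  set t := ∑ i, ‖u i‖ ^ 2 with ht
  have hs0 : 0 ≤ s := by positivity
  have ht0 : 0 ≤ t := by positivity
  have hss : Real.sqrt s ^ 2 = s := Real.sq_sqrt hs0
  have htt : Real.sqrt t ^ 2 = t := Real.sq_sqrt ht0
  rcases eq_or_lt_of_le hs0 with h | h
  · rw [← h]; positivity
  · have hmain : α' * s ≤ Real.sqrt s * Real.sqrt t := le_trans key cs
    have hsq : (α' * s) ^ 2 ≤ s * t := by
      calc (α' * s)^2 ≤ (Real.sqrt s * Real.sqrt t)^2 := by
            apply pow_le_pow_left₀ (by positivity) hmain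
        _ = s * t := by rw [mul_pow, hss, htt]
    rw [div_mul_eq_mul_div, le_div_iff₀ (by positivity), one_mul]
    nlinarith

lemma frob_mul_right_bound (G : Matrix γ γ 𝕜) (hG : Gᴴ = G) (c : ℝ)
    (h : ∀ u : γ → 𝕜, ∑ j, ‖(G *ᵥ u) j‖ ^ 2 ≤ c * ∑ i, ‖u i‖ ^ 2)
    (X : Matrix α γ 𝕜) : frob (X * G) ^ 2 ≤ c * frob X ^ 2 := by
  rw [frob_sq, frob_sq, Finset.mul_sum]
  apply Finset.sum_le_sum
  intro i _
  have entry : ∀ j, (G *ᵥ star (X i)) j = star ((X * G) i j) := by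
    intro j
    simp only [mulVec, dotProduct, mul_apply, Pi.star_apply, star_sum, star_mul']
    congr 1; ext l
    rw [show star (G l j) = Gᴴ j l from rfl, hG]
    ring
  calc ∑ j, ‖(X * G) i j‖ ^ 2 = ∑ j, ‖(G *ᵥ star (X i)) j‖ ^ 2 := by
        simp [entry]
    _ ≤ c * ∑ l, ‖star (X i) l‖ ^ 2 := h _
    _ = c * ∑ l, ‖X i l‖ ^ 2 := by simp

end helpers

lemma stmt19_deterministic {𝕜 : Type*} [RCLike 𝕜] {k N m r : ℕ}
    (Wm : Matrix (Fin k) (Fin N) 𝕜) (A : Matrix (Fin m) (Fin N) 𝕜)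
    (V₁ : Matrix (Fin N) (Fin r) 𝕜) (hV₁ : V₁ᴴ * V₁ = 1)
    (α ε : ℝ) (hα : 0 < α) (hε : 0 < ε)
    (h1 : ∀ u : Fin r → 𝕜, α * ∑ i, ‖u i‖ ^ 2 ≤ ∑ j, ‖((Wm * V₁) *ᵥ u) j‖ ^ 2)
    (A₂ : Matrix (Fin m) (Fin N) 𝕜) (hA2 : A₂ = A - A * V₁ * V₁ᴴ)
    (hD : frob ((Wm * A₂ᴴ)ᴴ * (Wm * V₁) - A₂ᴴᴴ * V₁) ≤ ε * frob A₂ᴴ * frob V₁)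
    (P : Matrix (Fin m) (Fin m) 𝕜) (hP1 : Pᴴ = P) (hP2 : P * P = P)
    (hP3 : P * (A * Wmᴴ) = A * Wmᴴ) :
    frob (A - P * A) ^ 2 ≤ (1 + r * ε ^ 2 / α ^ 2) * frob A₂ ^ 2 := by
  have hAV : A₂ * V₁ = 0 := by
    rw [hA2, Matrix.sub_mul, Matrix.mul_assoc (A * V₁) V₁ᴴ V₁, hV₁, Matrix.mul_one, sub_self]
  set B : Matrix (Fin k) (Fin r) 𝕜 := Wm * V₁ with hB
  set S : Matrix (Fin r) (Fin r) 𝕜 := Bᴴ * B with hS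
  set G : Matrix (Fin r) (Fin r) 𝕜 := S⁻¹ with hG
  set C : Matrix (Fin N) (Fin r) 𝕜 := Wmᴴ * B with hC
  set D : Matrix (Fin m) (Fin r) 𝕜 := A₂ * C with hDdef
  have hSG : S * G = 1 := Matrix.mul_nonsing_inv _ (gram_isUnit hα B h1)
  have hSH : Sᴴ = S := by
    rw [hS, conjTranspose_mul, conjTranspose_conjTranspose]
  have hGH : Gᴴ = G := by
    rw [hG, Matrix.conjTranspose_nonsing_inv, hSH]
  have hGb : ∀ u : Fin r → 𝕜, ∑ j, ‖(G *ᵥ u) j‖ ^ 2 ≤ (1 / α ^ 2) * ∑ i, ‖u i‖ ^ 2 :=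
    inv_gram_bound hα B h1
  -- frob D bound
  have hDe : (Wm * A₂ᴴ)ᴴ * (Wm * V₁) - A₂ᴴᴴ * V₁ = D := by
    rw [conjTranspose_mul, conjTranspose_conjTranspose, hAV, sub_zero, hDdef, hC, hB,
      Matrix.mul_assoc]
  have hDfrob : frob D ≤ ε * frob A₂ * frob V₁ := by
    rw [← hDe]
    calc frob ((Wm * A₂ᴴ)ᴴ * (Wm * V₁) - A₂ᴴᴴ * V₁) ≤ ε * frob A₂ᴴ * frob V₁ := hD
      _ = ε * frob A₂ * frob V₁ := by rw [frob_conjTranspose]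
  -- matrix identity
  have hVC : V₁ᴴ * C = S := by
    rw [hC, ← Matrix.mul_assoc, hS, hB, conjTranspose_mul]
  have inner1 : V₁ᴴ * (C * (G * V₁ᴴ)) = V₁ᴴ := by
    rw [← Matrix.mul_assoc, hVC, ← Matrix.mul_assoc, hSG, Matrix.one_mul]
  set Z : Matrix (Fin N) (Fin N) 𝕜 := C * (G * V₁ᴴ) with hZ
  have hsplit : A * Z = D * G * V₁ᴴ + A * V₁ * V₁ᴴ := by
    have hAdec : A = A₂ + A * V₁ * V₁ᴴ := by rw [hA2]; abel
    calc A * Z = (A₂ + A * V₁ * V₁ᴴ) * Z := by rw [← hAdec]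
      _ = A₂ * Z + A * V₁ * V₁ᴴ * Z := Matrix.add_mul _ _ _
      _ = D * G * V₁ᴴ + A * V₁ * V₁ᴴ := by
          congr 1
          · rw [hZ, hDdef]; simp only [Matrix.mul_assoc]
          · rw [hZ, Matrix.mul_assoc (A * V₁) V₁ᴴ _, inner1]
  have key : A - A * Z = A₂ - D * G * V₁ᴴ := by
    rw [hsplit, hA2]; abel
  have hPZ : P * (A * Z) = A * Z := by
    have e2 : A * Z = (A * Wmᴴ) * (B * (G * V₁ᴴ)) := by
      rw [hZ, hC]; simp only [Matrix.mul_assoc]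
    rw [e2, ← Matrix.mul_assoc, hP3]
  have hstep1 : frob (A - P * A) ^ 2 ≤ frob (A₂ - D * G * V₁ᴴ) ^ 2 := by
    have e3 : A - P * A = (A - A * Z) - P * (A - A * Z) := by
      rw [Matrix.mul_sub, hPZ]; abel
    rw [e3, key]
    exact frob_proj_le P hP1 hP2 _
  -- pythagoras
  have htr : trace (A₂ᴴ * (-(D * G * V₁ᴴ))) = 0 := by
    have : A₂ᴴ * (D * G * V₁ᴴ) = (A₂ᴴ * (D * G)) * V₁ᴴ := by
      simp only [Matrix.mul_assoc]
    rw [Matrix.mul_neg, trace_neg, this, trace_mul_comm, ← Matrix.mul_assoc,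
      show V₁ᴴ * A₂ᴴ = (A₂ * V₁)ᴴ from (conjTranspose_mul _ _).symm, hAV]
    simp
  have hpyth : frob (A₂ - D * G * V₁ᴴ) ^ 2 = frob A₂ ^ 2 + frob (D * G * V₁ᴴ) ^ 2 := by
    rw [sub_eq_add_neg, frob_pythagoras _ _ htr, frob_neg]
  -- bound the second term
  have hterm : frob (D * G * V₁ᴴ) ^ 2 ≤ (r : ℝ) * ε ^ 2 / α ^ 2 * frob A₂ ^ 2 := by
    have e4 : frob (D * G * V₁ᴴ) ^ 2 = frob (D * G) ^ 2 := frob_mul_isometry _ _ hV₁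
    have e5 : frob (D * G) ^ 2 ≤ (1 / α ^ 2) * frob D ^ 2 :=
      frob_mul_right_bound G hGH _ hGb D
    have e6 : frob D ^ 2 ≤ (ε * frob A₂ * frob V₁) ^ 2 := by
      apply pow_le_pow_left₀ (frob_nonneg D) hDfrob
    have e7 : frob V₁ ^ 2 = (r : ℝ) := by
      rw [frob_isometry_sq V₁ hV₁, Fintype.card_fin]
    have e8 : (ε * frob A₂ * frob V₁) ^ 2 = ε ^ 2 * frob A₂ ^ 2 * (r : ℝ) := by
      rw [mul_pow, mul_pow, e7]
    rw [e4]
    calc frob (D * G) ^ 2 ≤ (1 / α ^ 2) * frob D ^ 2 := e5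
      _ ≤ (1 / α ^ 2) * (ε ^ 2 * frob A₂ ^ 2 * (r : ℝ)) := by
          rw [← e8]
          exact mul_le_mul_of_nonneg_left e6 (by positivity)
      _ = (r : ℝ) * ε ^ 2 / α ^ 2 * frob A₂ ^ 2 := by ring
  calc frob (A - P * A) ^ 2 ≤ frob (A₂ - D * G * V₁ᴴ) ^ 2 := hstep1
    _ = frob A₂ ^ 2 + frob (D * G * V₁ᴴ) ^ 2 := hpyth
    _ ≤ frob A₂ ^ 2 + (r : ℝ) * ε ^ 2 / α ^ 2 * frob A₂ ^ 2 := by linarith [hterm]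
    _ = (1 + r * ε ^ 2 / α ^ 2) * frob A₂ ^ 2 := by ring

/-- if the random sketch `W` satisfies, with probability `≥ 1 - δ/2`,
`σ_min²(W V₁) ≥ α` for the matrix `V₁` of top-`r` right singular vectors of `A`
(characterized here by orthonormal columns and the Eckart–Young optimality of
`A_r = A V₁ V₁ᴴ` among matrices of rank `≤ r`), and the `(ε, δ/2)`-approximate matrix
multiplication property, then with probability `≥ 1 - δ` the orthogonal projector `P_ω`
onto the column space of `A Wᴴ` satisfies
`‖A - P_ω A‖_F² ≤ (1 + r ε²/α²) ‖A - A_r‖_F²`. -/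
theorem stmt19 {𝕜 : Type*} [RCLike 𝕜] {Ωs : Type*} [MeasurableSpace Ωs]
    (μ : Measure Ωs) [IsProbabilityMeasure μ]
    (k N m r : ℕ)
    (W : Ωs → Matrix (Fin k) (Fin N) 𝕜)
    (A : Matrix (Fin m) (Fin N) 𝕜)
    (V₁ : Matrix (Fin N) (Fin r) 𝕜) (hV₁ : V₁ᴴ * V₁ = 1)
    (hbest : ∀ B : Matrix (Fin m) (Fin N) 𝕜, B.rank ≤ r →
      frob (A - A * V₁ * V₁ᴴ) ≤ frob (A - B))
    (α ε δ : ℝ) (hα : 0 < α) (hε : 0 < ε) (hδ : 0 < δ) (hδ1 : δ < 1)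
    (hmin : μ {ω | ∀ u : Fin r → 𝕜,
        α * ∑ i, ‖u i‖ ^ 2 ≤ ∑ j, ‖((W ω * V₁) *ᵥ u) j‖ ^ 2} ≥
      1 - ENNReal.ofReal (δ / 2))
    (hamm : ∀ (p q : ℕ) (X : Matrix (Fin N) (Fin p) 𝕜) (Y : Matrix (Fin N) (Fin q) 𝕜),
      μ {ω | frob ((W ω * X)ᴴ * (W ω * Y) - Xᴴ * Y) > ε * frob X * frob Y} <
        ENNReal.ofReal (δ / 2))
    (Pr : Ωs → Matrix (Fin m) (Fin m) 𝕜)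
    (hPr : ∀ ω, (Pr ω)ᴴ = Pr ω ∧ Pr ω * Pr ω = Pr ω ∧
      Pr ω * (A * (W ω)ᴴ) = A * (W ω)ᴴ ∧
      ∃ C : Matrix (Fin k) (Fin m) 𝕜, Pr ω = A * (W ω)ᴴ * C) :
    μ {ω | frob (A - Pr ω * A) ^ 2 ≤
        (1 + r * ε ^ 2 / α ^ 2) * frob (A - A * V₁ * V₁ᴴ) ^ 2} ≥
      1 - ENNReal.ofReal δ := by
  classical
  set A₂ : Matrix (Fin m) (Fin N) 𝕜 := A - A * V₁ * V₁ᴴ with hA₂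
  set E₁ : Set Ωs := {ω | ∀ u : Fin r → 𝕜,
      α * ∑ i, ‖u i‖ ^ 2 ≤ ∑ j, ‖((W ω * V₁) *ᵥ u) j‖ ^ 2} with hE₁
  set Bad : Set Ωs := {ω |
      frob ((W ω * A₂ᴴ)ᴴ * (W ω * V₁) - A₂ᴴᴴ * V₁) > ε * frob A₂ᴴ * frob V₁} with hBadDef
  have hBadμ : μ Bad < ENNReal.ofReal (δ / 2) := hamm m r A₂ᴴ V₁
  have hsub : E₁ ∩ Badᶜ ⊆ {ω | frob (A - Pr ω * A) ^ 2 ≤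
      (1 + r * ε ^ 2 / α ^ 2) * frob A₂ ^ 2} := by
    rintro ω ⟨h1ω, h2ω⟩
    simp only [Set.mem_setOf_eq]
    simp only [hE₁, Set.mem_setOf_eq] at h1ω
    simp only [Set.mem_compl_iff, hBadDef, Set.mem_setOf_eq, not_lt] at h2ω
    obtain ⟨hP1, hP2, hP3, -⟩ := hPr ω
    exact stmt19_deterministic (W ω) A V₁ hV₁ α ε hα hε h1ω A₂ hA₂ h2ω (Pr ω) hP1 hP2 hP3
  have hhalf : ENNReal.ofReal (δ / 2) + ENNReal.ofReal (δ / 2) = ENNReal.ofReal δ := by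
    rw [← ENNReal.ofReal_add (by positivity) (by positivity), add_halves]
  have h5 : μ E₁ ≤ μ (E₁ ∩ Badᶜ) + μ Bad := by
    calc μ E₁ ≤ μ ((E₁ ∩ Badᶜ) ∪ Bad) := by
          apply measure_mono
          intro x hx
          by_cases hB : x ∈ Bad
          · exact Or.inr hB
          · exact Or.inl ⟨hx, hB⟩
      _ ≤ μ (E₁ ∩ Badᶜ) + μ Bad := measure_union_le _ _
  have h6 : 1 - ENNReal.ofReal δ ≤ μ (E₁ ∩ Badᶜ) := by
    have h7 : μ E₁ - μ Bad ≤ μ (E₁ ∩ Badᶜ) := tsub_le_iff_right.2 h5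
    refine le_trans ?_ h7
    calc 1 - ENNReal.ofReal δ
        = 1 - (ENNReal.ofReal (δ / 2) + ENNReal.ofReal (δ / 2)) := by rw [hhalf]
      _ = 1 - ENNReal.ofReal (δ / 2) - ENNReal.ofReal (δ / 2) := (tsub_tsub _ _ _).symm
      _ ≤ μ E₁ - μ Bad := tsub_le_tsub hmin hBadμ.le
  exact le_trans h6 (measure_mono hsub)
end
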